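/- arXiv:1307.3326 — 7 statements merged into one kernel-verified Lean document; each statement's English description precedes it below -/
import Mathlib

section
/- Let n ∈ (0,2), η > 0, ν = (n-2)/2, and define Y⁻(x) = ∫₀^∞ z^{η-1} S⁻_ν(xz) e^{-(z²+x²)/2} dz where S⁻_ν(u) = u^{-ν} I_ν(u). Then for every x > 0, x·Y⁻_{ν+1,η+2}(x) := x ∫₀^∞ z^{η+1} S⁻_{ν+1}(xz) e^{-(z²+x²)/2} dz equals x Y⁻(x) + (η - n) x^{1-n} e^{-x²/2} ∫₀^x Y⁻_a(a) a^{n-1} e^{a²/2} da, where Y⁻_a(a) denotes Y⁻ evaluated at a. -/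
open Real MeasureTheory

noncomputable def besselI (ν x : ℝ) : ℝ :=
  (x / 2) ^ ν * ∑' k : ℕ, (x ^ 2 / 4) ^ k / ((Nat.factorial k : ℝ) * Real.Gamma (ν + (k : ℝ) + 1))

noncomputable def Sminus (ν x : ℝ) : ℝ := x ^ (-ν) * besselI ν x

noncomputable def Ym (ν η x : ℝ) : ℝ :=
  ∫ z in Set.Ioi (0:ℝ), z ^ (η - 1) * Sminus ν (x * z) * Real.exp (-(z ^ 2 + x ^ 2) / 2)

/-
Expanding `S⁻_ν` in its power series and integrating term by term against the Gaussian weight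
gives `Y⁻_{ν,η}(x) = e^{-x²/2} ∑ₖ cₖ x^{2k}` with `cₖ = ymCoeff ν η k`. Passing from `(ν, η)` to
`(ν+1, η+2)` multiplies `cₖ` by `(η/2+k)/(ν+k+1) = 1 + (η-n)/(2k+n)`, where `n = 2ν+2`, and
`∫₀^x Y⁻_{ν,η}(a) a^{n-1} e^{a²/2} da = x^n ∑ₖ cₖ x^{2k}/(2k+n)` is exactly the correction term.
-/

open Set Filter Nat

noncomputable def ymCoeff (ν η : ℝ) (k : ℕ) : ℝ :=
  2 ^ ((η - 2) / 2 - ν) * Gamma (η / 2 + k) / (2 ^ k * k ! * Gamma (ν + k + 1))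

section

variable {ν η : ℝ}

lemma ymCoeff_pos (hν : -1 < ν) (hη : 0 < η) (k : ℕ) : 0 < ymCoeff ν η k := by
  have := Gamma_pos_of_pos (show 0 < η / 2 + k by positivity)
  have := Gamma_pos_of_pos (show 0 < ν + k + 1 by linarith [k.cast_nonneg (α := ℝ)])
  unfold ymCoeff
  positivity

lemma ymCoeff_succ (hν : -1 < ν) (hη : 0 < η) (k : ℕ) :
    ymCoeff ν η (k + 1) = ymCoeff ν η k * ((η / 2 + k) / (2 * (k + 1) * (ν + k + 1))) := by
  have hη' : 0 < η / 2 + k := by positivity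
  have hν' : 0 < ν + k + 1 := by linarith [k.cast_nonneg (α := ℝ)]
  have := Gamma_pos_of_pos hη'
  have := Gamma_pos_of_pos hν'
  unfold ymCoeff
  rw [Nat.factorial_succ, pow_succ, Nat.cast_mul, Nat.cast_succ,
    show η / 2 + (k + 1) = (η / 2 + k) + 1 by ring, Gamma_add_one hη'.ne',
    show ν + (k + 1) + 1 = (ν + k + 1) + 1 by ring, Gamma_add_one hν'.ne']
  field_simp

lemma ymCoeff_add_one_add_two (hν : -1 < ν) (hη : 0 < η) (k : ℕ) :
    ymCoeff (ν + 1) (η + 2) k = ymCoeff ν η k * ((η / 2 + k) / (ν + k + 1)) := by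
  have hη' : 0 < η / 2 + k := by positivity
  have hν' : 0 < ν + k + 1 := by linarith [k.cast_nonneg (α := ℝ)]
  have := Gamma_pos_of_pos hη'
  have := Gamma_pos_of_pos hν'
  unfold ymCoeff
  rw [show (η + 2 - 2) / 2 - (ν + 1) = (η - 2) / 2 - ν by ring,
    show (η + 2) / 2 + k = (η / 2 + k) + 1 by ring, Gamma_add_one hη'.ne',
    show ν + 1 + k + 1 = (ν + k + 1) + 1 by ring, Gamma_add_one hν'.ne']
  field_simp

lemma summable_ymCoeff_mul_pow (hν : -1 < ν) (hη : 0 < η) (x : ℝ) :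
    Summable fun k : ℕ => ymCoeff ν η k * x ^ (2 * k) := by
  -- Once `k ≥ max 1 ((1 + η) x²)`, consecutive terms shrink by a factor of at least `2`.
  refine summable_of_ratio_norm_eventually_le (r := 1 / 2) (by norm_num) ?_
  filter_upwards [eventually_ge_atTop ⌈(1 + η) * x ^ 2⌉₊, eventually_ge_atTop 1]
    with k hkx hk1
  have hkx : (1 + η) * x ^ 2 ≤ k := Nat.ceil_le.mp hkx
  have hk1 : (1 : ℝ) ≤ k := by exact_mod_cast hk1
  have hc := (ymCoeff_pos hν hη k).le
  have hxk (m : ℕ) : 0 ≤ x ^ (2 * m) := (even_two_mul m).pow_nonneg x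
  have hratio : x ^ 2 * ((η / 2 + k) / (2 * (k + 1) * (ν + k + 1))) ≤ 1 / 2 := by
    rw [mul_div_assoc', div_le_iff₀ (by nlinarith)]
    nlinarith [sq_nonneg x, mul_le_mul_of_nonneg_left hk1 (mul_nonneg hη.le (sq_nonneg x))]
  rw [norm_of_nonneg (mul_nonneg (ymCoeff_pos hν hη _).le (hxk _)),
    norm_of_nonneg (mul_nonneg hc (hxk k)), ymCoeff_succ hν hη,
    show 2 * (k + 1) = 2 * k + 2 by ring, pow_add]
  calc _ = ymCoeff ν η k * x ^ (2 * k) * (x ^ 2 * ((η / 2 + k) / (2 * (k + 1) * (ν + k + 1)))) :=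
        by ring
    _ ≤ ymCoeff ν η k * x ^ (2 * k) * (1 / 2) :=
        mul_le_mul_of_nonneg_left hratio (mul_nonneg hc (hxk k))
    _ = _ := mul_comm _ _

lemma summable_ymCoeff_mul_pow_div (hν : -1 < ν) (hη : 0 < η) (x : ℝ) {p : ℝ} (hp : 0 < p) :
    Summable fun k : ℕ => ymCoeff ν η k * x ^ (2 * k) / (2 * k + p) := by
  refine ((summable_ymCoeff_mul_pow hν hη x).div_const p).of_nonneg_of_le
    (fun k => ?_) fun k => ?_
  all_goals
    have := (ymCoeff_pos hν hη k).le
    have := (even_two_mul k).pow_nonneg x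
  · positivity
  · gcongr
    linarith [k.cast_nonneg (α := ℝ)]

end

lemma integral_rpow_mul_exp_neg_sq_div_two {q : ℝ} (hq : -1 < q) :
    ∫ z in Ioi (0 : ℝ), z ^ q * exp (-z ^ 2 / 2) = 2 ^ ((q - 1) / 2) * Gamma ((q + 1) / 2) := by
  have h := integral_rpow_mul_exp_neg_mul_rpow two_pos hq (one_half_pos (α := ℝ))
  simp only [rpow_two] at h
  convert h using 1
  · ring_nf
  · rw [one_div, inv_rpow zero_le_two, ← rpow_neg zero_le_two, ← rpow_neg_one,
      ← rpow_add two_pos]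
    ring_nf

lemma Sminus_eq_tsum {ν u : ℝ} (hu : 0 < u) :
    Sminus ν u = 2 ^ (-ν) * ∑' k : ℕ, (u ^ 2 / 4) ^ k / (k ! * Gamma (ν + k + 1)) := by
  rw [Sminus, besselI, div_rpow hu.le zero_le_two, ← mul_assoc, div_eq_mul_inv, ← mul_assoc,
    ← rpow_add hu, neg_add_cancel, rpow_zero, one_mul, rpow_neg zero_le_two]

lemma integral_tsum_of_nonneg {α ι : Type*} [MeasurableSpace α] [Countable ι] {μ : Measure α}
    {F : ι → α → ℝ} (hF_int : ∀ i, Integrable (F i) μ) (hF_nonneg : ∀ i, 0 ≤ᵐ[μ] F i)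
    (hF_sum : Summable fun i => ∫ a, F i a ∂μ) :
    ∫ a, ∑' i, F i a ∂μ = ∑' i, ∫ a, F i a ∂μ := by
  refine (integral_tsum_of_summable_integral_norm hF_int (hF_sum.congr fun i => ?_)).symm
  exact integral_congr_ae <| (hF_nonneg i).mono fun a ha => (norm_of_nonneg ha).symm

lemma Ym_eq_exp_mul_tsum {ν η x : ℝ} (hν : -1 < ν) (hη : 0 < η) (hx : 0 < x) :
    Ym ν η x = exp (-x ^ 2 / 2) * ∑' k : ℕ, ymCoeff ν η k * x ^ (2 * k) := by
  set a : ℕ → ℝ := fun k =>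
    exp (-x ^ 2 / 2) * 2 ^ (-ν) * x ^ (2 * k) / (4 ^ k * k ! * Gamma (ν + k + 1)) with ha
  set F : ℕ → ℝ → ℝ := fun k z => a k * (z ^ (η - 1 + 2 * k) * exp (-z ^ 2 / 2)) with hF
  have hq (k : ℕ) : -1 < η - 1 + 2 * k := by linarith [k.cast_nonneg (α := ℝ)]
  have ha_pos (k : ℕ) : 0 < a k := by
    have := Gamma_pos_of_pos (show 0 < ν + k + 1 by linarith [k.cast_nonneg (α := ℝ)])
    positivity
  have hF_int (k : ℕ) : IntegrableOn (F k) (Ioi 0) := by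
    refine IntegrableOn.congr_fun
      ((integrableOn_rpow_mul_exp_neg_mul_sq one_half_pos (hq k)).const_mul (a k))
      (fun z _ => ?_) measurableSet_Ioi
    simp only [hF]
    ring_nf
  have hF_nonneg (k : ℕ) : 0 ≤ᵐ[volume.restrict (Ioi 0)] F k :=
    ae_restrict_of_forall_mem measurableSet_Ioi fun z (hz : 0 < z) => by
      have := ha_pos k
      positivity
  have hF_integral (k : ℕ) :
      ∫ z in Ioi 0, F k z = exp (-x ^ 2 / 2) * (ymCoeff ν η k * x ^ (2 * k)) := by
    simp only [hF, ha]
    rw [integral_const_mul, integral_rpow_mul_exp_neg_sq_div_two (hq k),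
      show (η - 1 + 2 * k - 1) / 2 = (η - 2) / 2 - ν + ν + k by ring,
      show (η - 1 + 2 * k + 1) / 2 = η / 2 + k by ring, rpow_add two_pos, rpow_add two_pos,
      rpow_natCast, rpow_neg zero_le_two, ymCoeff,
      show (4 : ℝ) ^ k = 2 ^ k * 2 ^ k by rw [← mul_pow]; norm_num]
    field_simp
  have hintegrand :
      EqOn (fun z => z ^ (η - 1) * Sminus ν (x * z) * exp (-(z ^ 2 + x ^ 2) / 2))
        (fun z => ∑' k, F k z) (Ioi 0) := by
    intro z (hz : 0 < z)
    simp only [Sminus_eq_tsum (mul_pos hx hz), ← tsum_mul_left, ← tsum_mul_right]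
    refine tsum_congr fun k => ?_
    simp only [hF, ha]
    rw [rpow_add hz, show (2 : ℝ) * k = ((2 * k : ℕ) : ℝ) by push_cast; ring,
      rpow_natCast, show -(z ^ 2 + x ^ 2) / 2 = -z ^ 2 / 2 + -x ^ 2 / 2 by ring, exp_add,
      div_pow]
    ring
  have hF_sum : Summable fun k => ∫ z in Ioi 0, F k z :=
    ((summable_ymCoeff_mul_pow hν hη x).mul_left _).congr fun k => (hF_integral k).symm
  rw [Ym, setIntegral_congr_fun measurableSet_Ioi hintegrand,
    integral_tsum_of_nonneg hF_int hF_nonneg hF_sum, tsum_congr hF_integral, tsum_mul_left]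

lemma integral_Ym_mul_rpow_mul_exp {ν η x p : ℝ} (hν : -1 < ν) (hη : 0 < η) (hx : 0 < x)
    (hp : 0 < p) :
    ∫ a in (0 : ℝ)..x, Ym ν η a * a ^ (p - 1) * exp (a ^ 2 / 2)
      = x ^ p * ∑' k : ℕ, ymCoeff ν η k * x ^ (2 * k) / (2 * k + p) := by
  have hr (k : ℕ) : -1 < 2 * (k : ℝ) + p - 1 := by linarith [k.cast_nonneg (α := ℝ)]
  have hintegrand : EqOn (fun a => Ym ν η a * a ^ (p - 1) * exp (a ^ 2 / 2))
      (fun a => ∑' k : ℕ, ymCoeff ν η k * a ^ (2 * k + p - 1)) (Ioc 0 x) := by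
    intro a ⟨ha, _⟩
    have hexp : exp (-a ^ 2 / 2) * exp (a ^ 2 / 2) = 1 := by
      rw [← exp_add, neg_div, neg_add_cancel, exp_zero]
    simp only [Ym_eq_exp_mul_tsum hν hη ha, ← tsum_mul_left, ← tsum_mul_right]
    refine tsum_congr fun k => ?_
    rw [show (2 : ℝ) * k + p - 1 = ((2 * k : ℕ) : ℝ) + (p - 1) by push_cast; ring,
      rpow_add ha, rpow_natCast]
    linear_combination ymCoeff ν η k * a ^ (2 * k) * a ^ (p - 1) * hexp
  have hint (k : ℕ) : IntegrableOn (fun a => ymCoeff ν η k * a ^ (2 * k + p - 1)) (Ioc 0 x) :=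
    (intervalIntegral.intervalIntegrable_rpow' (hr k)).1.const_mul _
  have hnonneg (k : ℕ) :
      0 ≤ᵐ[volume.restrict (Ioc 0 x)] fun a => ymCoeff ν η k * a ^ (2 * k + p - 1) :=
    ae_restrict_of_forall_mem measurableSet_Ioc fun a ha => by
      have := ymCoeff_pos hν hη k
      have := ha.1
      positivity
  have hterm (k : ℕ) : ∫ a in Ioc 0 x, ymCoeff ν η k * a ^ (2 * k + p - 1)
      = x ^ p * (ymCoeff ν η k * x ^ (2 * k) / (2 * k + p)) := by
    have hkp : 0 < 2 * (k : ℝ) + p := by linarith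
    rw [integral_const_mul, ← intervalIntegral.integral_of_le hx.le,
      integral_rpow (Or.inl (hr k)), sub_add_cancel, zero_rpow hkp.ne',
      show (2 : ℝ) * k + p = ((2 * k : ℕ) : ℝ) + p by push_cast; ring, rpow_add hx, rpow_natCast]
    ring
  have hsum : Summable fun k => ∫ a in Ioc 0 x, ymCoeff ν η k * a ^ (2 * k + p - 1) :=
    ((summable_ymCoeff_mul_pow_div hν hη x hp).mul_left _).congr fun k => (hterm k).symm
  rw [intervalIntegral.integral_of_le hx.le, setIntegral_congr_fun measurableSet_Ioc hintegrand,
    integral_tsum_of_nonneg hint hnonneg hsum, tsum_congr hterm, tsum_mul_left]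

theorem stmt5 (n η : ℝ) (hn : n ∈ Set.Ioo (0:ℝ) 2) (hη : 0 < η) (x : ℝ) (hx : 0 < x) :
    x * Ym ((n - 2) / 2 + 1) (η + 2) x
      = x * Ym ((n - 2) / 2) η x
        + (η - n) * x ^ (1 - n) * Real.exp (-x ^ 2 / 2)
          * ∫ a in (0:ℝ)..x, Ym ((n - 2) / 2) η a * a ^ (n - 1) * Real.exp (a ^ 2 / 2) := by
  obtain ⟨hn0, -⟩ := hn
  set ν := (n - 2) / 2 with hν_def
  have hν : -1 < ν := by linarith
  have hshift (k : ℕ) : ymCoeff (ν + 1) (η + 2) k * x ^ (2 * k)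
      = ymCoeff ν η k * x ^ (2 * k)
        + (η - n) * (ymCoeff ν η k * x ^ (2 * k) / (2 * k + n)) := by
    have : 0 < ν + k + 1 := by linarith [k.cast_nonneg (α := ℝ)]
    have : 0 < 2 * (k : ℝ) + n := by linarith [k.cast_nonneg (α := ℝ)]
    rw [ymCoeff_add_one_add_two hν hη]
    field_simp
    linear_combination
  have hxn : x ^ (1 - n) * x ^ n = x := by rw [← rpow_add hx]; simp
  rw [Ym_eq_exp_mul_tsum (by linarith) (by linarith) hx, Ym_eq_exp_mul_tsum hν hη hx,
    integral_Ym_mul_rpow_mul_exp hν hη hx hn0, tsum_congr hshift,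
    (summable_ymCoeff_mul_pow hν hη x).tsum_add
      ((summable_ymCoeff_mul_pow_div hν hη x hn0).mul_left _), tsum_mul_left]
  linear_combination
    (n - η) * exp (-x ^ 2 / 2) * (∑' k : ℕ, ymCoeff ν η k * x ^ (2 * k) / (2 * k + n)) * hxn
end

section
/- Let n ∈ (0,2) and define κ̄_n as the unique positive solution of 1 = κ^{2-n} ∫₀^κ a^{n-1} e^{(a²-κ²)/2} da. Then κ̄_n / √n → 1 as n → 0⁺. -/
/-!
Let `F n k = k ^ (2 - n) * ∫₀ᵏ a ^ (n - 1) * exp ((a ^ 2 - k ^ 2) / 2) da`,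
so that `F n (κ n) = 1`.
Bounding the Gaussian factor by `1` gives `F n k ≤ k ^ 2 / n`, hence `n ≤ κ n ^ 2`.
For `n ≤ 1` we have `a ^ (n - 1) ≥ k ^ (n - 1)` on `(0, k]`, and the Gaussian factor dominates
both `exp (-k ^ 2 / 2)` and its tangent-line minorant `exp (k * a - k ^ 2)`. Applying the first
bound to `a ^ (n - 1) - k ^ (n - 1)` and the second to `k ^ (n - 1)` gives
`F n k ≥ 1 - exp (-k ^ 2) + (1 / n - 1) * k ^ 2 * exp (-k ^ 2 / 2)`,
hence `(1 - n) * κ n ^ 2 ≤ n`.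
So `1 ≤ κ n ^ 2 / n ≤ (1 - n)⁻¹`.
-/

open Real MeasureTheory intervalIntegral Filter Topology

noncomputable def kappaFunctional (n k : ℝ) : ℝ :=
  k ^ (2 - n) * ∫ a in (0:ℝ)..k, a ^ (n - 1) * exp ((a ^ 2 - k ^ 2) / 2)

lemma integral_rpow_sub_one {n : ℝ} (hn : 0 < n) (k : ℝ) :
    ∫ a in (0:ℝ)..k, a ^ (n - 1) = k ^ n / n := by
  rw [integral_rpow (Or.inl (by linarith)), sub_add_cancel, zero_rpow hn.ne', sub_zero]

lemma intervalIntegrable_rpow_sub_one {n : ℝ} (hn : 0 < n) (x y : ℝ) :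
    IntervalIntegrable (fun a : ℝ => a ^ (n - 1)) volume x y :=
  intervalIntegrable_rpow' (by linarith)

lemma intervalIntegrable_rpow_sub_one_mul_exp {n : ℝ} (hn : 0 < n) (k x y : ℝ) :
    IntervalIntegrable (fun a : ℝ => a ^ (n - 1) * exp ((a ^ 2 - k ^ 2) / 2)) volume x y :=
  (intervalIntegrable_rpow_sub_one hn x y).mul_continuousOn (by fun_prop)

lemma integral_exp_mul_sub_sq {k : ℝ} (hk : k ≠ 0) :
    ∫ a in (0:ℝ)..k, exp (k * a - k ^ 2) = (1 - exp (-k ^ 2)) / k := by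
  rw [integral_comp_mul_sub (f := exp) hk, integral_exp]
  simp only [mul_zero, zero_sub, smul_eq_mul, ← sq, sub_self, exp_zero]
  field_simp

lemma rpow_two_sub_mul_rpow {k : ℝ} (hk : 0 < k) (n : ℝ) : k ^ (2 - n) * k ^ n = k ^ 2 := by
  rw [← rpow_add hk, sub_add_cancel, rpow_two]

lemma kappaFunctional_le {n k : ℝ} (hn : 0 < n) (hk : 0 < k) :
    kappaFunctional n k ≤ k ^ 2 / n := by
  have hI : ∫ a in (0:ℝ)..k, a ^ (n - 1) * exp ((a ^ 2 - k ^ 2) / 2) ≤ k ^ n / n := by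
    rw [← integral_rpow_sub_one hn k]
    refine integral_mono_on hk.le (intervalIntegrable_rpow_sub_one_mul_exp hn k 0 k)
      (intervalIntegrable_rpow_sub_one hn 0 k) fun a ha => ?_
    have hexp : exp ((a ^ 2 - k ^ 2) / 2) ≤ 1 := exp_le_one_iff.mpr (by nlinarith [ha.1, ha.2])
    exact mul_le_of_le_one_right (rpow_nonneg ha.1 _) hexp
  calc kappaFunctional n k ≤ k ^ (2 - n) * (k ^ n / n) :=
        mul_le_mul_of_nonneg_left hI (by positivity)
    _ = k ^ 2 / n := by rw [← mul_div_assoc, rpow_two_sub_mul_rpow hk]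

lemma le_kappaFunctional {n k : ℝ} (hn : 0 < n) (hn1 : n ≤ 1) (hk : 0 < k) :
    1 - exp (-k ^ 2) + (1 / n - 1) * k ^ 2 * exp (-k ^ 2 / 2) ≤ kappaFunctional n k := by
  set e := exp (-k ^ 2 / 2)
  have hI : k ^ (n - 1) * ((1 - exp (-k ^ 2)) / k - k * e) + k ^ n / n * e ≤
      ∫ a in (0:ℝ)..k, a ^ (n - 1) * exp ((a ^ 2 - k ^ 2) / 2) := by
    have hexp : IntervalIntegrable (fun a => exp (k * a - k ^ 2)) volume 0 k :=
      (by fun_prop : Continuous fun a => exp (k * a - k ^ 2)).intervalIntegrable 0 k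
    have hlower : ∫ a in (0:ℝ)..k, k ^ (n - 1) * (exp (k * a - k ^ 2) - e) + a ^ (n - 1) * e =
        k ^ (n - 1) * ((1 - exp (-k ^ 2)) / k - k * e) + k ^ n / n * e := by
      rw [integral_add ((hexp.sub intervalIntegrable_const).const_mul _)
          ((intervalIntegrable_rpow_sub_one hn 0 k).mul_const _),
        intervalIntegral.integral_const_mul, integral_sub hexp intervalIntegrable_const,
        intervalIntegral.integral_mul_const, intervalIntegral.integral_const,
        integral_exp_mul_sub_sq hk.ne', integral_rpow_sub_one hn]
      simp
    rw [← hlower]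
    refine integral_mono_on_of_le_Ioo hk.le
      (((hexp.sub intervalIntegrable_const).const_mul _).add
        ((intervalIntegrable_rpow_sub_one hn 0 k).mul_const _))
      (intervalIntegrable_rpow_sub_one_mul_exp hn k 0 k) fun a ha => ?_
    have hpow : k ^ (n - 1) ≤ a ^ (n - 1) := rpow_le_rpow_of_nonpos ha.1 ha.2.le (by linarith)
    have he : e ≤ exp ((a ^ 2 - k ^ 2) / 2) := exp_le_exp.mpr (by nlinarith)
    have hgauss : exp (k * a - k ^ 2) ≤ exp ((a ^ 2 - k ^ 2) / 2) :=
      exp_le_exp.mpr (by nlinarith [sq_nonneg (a - k)])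
    nlinarith [rpow_pos_of_pos hk (n - 1)]
  calc 1 - exp (-k ^ 2) + (1 / n - 1) * k ^ 2 * e
      = k ^ (2 - n) * (k ^ (n - 1) * ((1 - exp (-k ^ 2)) / k - k * e) + k ^ n / n * e) := by
        have hk1 : k ^ (2 - n) * k ^ (n - 1) = k := by
          rw [← rpow_add hk, show 2 - n + (n - 1) = 1 by ring, rpow_one]
        rw [mul_add, ← mul_assoc, hk1, show k ^ (2 - n) * (k ^ n / n * e) =
          k ^ (2 - n) * k ^ n * e / n by ring, rpow_two_sub_mul_rpow hk]
        field_simp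
        ring
    _ ≤ kappaFunctional n k := mul_le_mul_of_nonneg_left hI (by positivity)

lemma sq_div_mem_Icc_of_kappaFunctional_eq_one {n k : ℝ} (hn : 0 < n) (hn1 : n < 1) (hk : 0 < k)
    (h : 1 = kappaFunctional n k) : 1 ≤ k ^ 2 / n ∧ k ^ 2 / n ≤ (1 - n)⁻¹ := by
  refine ⟨h.trans_le (kappaFunctional_le hn hk), ?_⟩
  have hlow := (le_kappaFunctional hn hn1.le hk).trans_eq h.symm
  have hsq : exp (-k ^ 2) = exp (-k ^ 2 / 2) * exp (-k ^ 2 / 2) := by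
    rw [← exp_add]; ring_nf
  have hcoef : (1 / n - 1) * k ^ 2 ≤ exp (-k ^ 2 / 2) := by
    refine le_of_mul_le_mul_right (a := exp (-k ^ 2 / 2)) ?_ (exp_pos _)
    linarith
  have he : exp (-k ^ 2 / 2) ≤ 1 := exp_le_one_iff.mpr (by nlinarith)
  have hkey : (1 - n) * k ^ 2 ≤ n := by
    have := mul_le_mul_of_nonneg_left (hcoef.trans he) hn.le
    rwa [mul_one, ← mul_assoc, mul_sub, mul_one_div_cancel hn.ne', mul_one] at this
  rw [div_le_iff₀ hn, inv_mul_eq_div, le_div_iff₀ (by linarith), mul_comm]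
  exact hkey

theorem stmt6_general (κ : ℝ → ℝ)
    (hκ : ∀ n ∈ Set.Ioo (0:ℝ) 2, 0 < κ n ∧
      1 = (κ n) ^ (2 - n) * ∫ a in (0:ℝ)..(κ n), a ^ (n - 1) * Real.exp ((a ^ 2 - (κ n) ^ 2) / 2)) :
    Filter.Tendsto (fun n => κ n / Real.sqrt n) (nhdsWithin 0 (Set.Ioo 0 2)) (nhds 1) := by
  have hbounds :
      ∀ᶠ n in 𝓝[Set.Ioo 0 2] (0:ℝ), 1 ≤ κ n ^ 2 / n ∧ κ n ^ 2 / n ≤ (1 - n)⁻¹ := by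
    filter_upwards [self_mem_nhdsWithin, nhdsWithin_le_nhds (Iio_mem_nhds one_pos)]
      with n hn hn1
    exact sq_div_mem_Icc_of_kappaFunctional_eq_one hn.1 hn1 (hκ n hn).1 (hκ n hn).2
  have hupper : Tendsto (fun n : ℝ => (1 - n)⁻¹) (𝓝[Set.Ioo 0 2] 0) (𝓝 1) := by
    have h : Tendsto (fun n : ℝ => (1 - n)⁻¹) (𝓝 0) (𝓝 (1 - 0)⁻¹) :=
      (tendsto_const_nhds.sub tendsto_id).inv₀ (by norm_num)
    simpa using h.mono_left nhdsWithin_le_nhds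
  have hsq : Tendsto (fun n => κ n ^ 2 / n) (𝓝[Set.Ioo 0 2] 0) (𝓝 1) :=
    tendsto_of_tendsto_of_tendsto_of_le_of_le' tendsto_const_nhds hupper
      (hbounds.mono fun _ h => h.1) (hbounds.mono fun _ h => h.2)
  refine (sqrt_one ▸ hsq.sqrt).congr' ?_
  filter_upwards [self_mem_nhdsWithin] with n hn
  rw [sqrt_div' _ hn.1.le, sqrt_sq (hκ n hn).1.le]

theorem stmt6 (κ : ℝ → ℝ)
    (hκ : ∀ n ∈ Set.Ioo (0:ℝ) 2, 0 < κ n ∧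
      1 = (κ n) ^ (2 - n) * ∫ a in (0:ℝ)..(κ n), a ^ (n - 1) * Real.exp ((a ^ 2 - (κ n) ^ 2) / 2))
    (huniq : ∀ n ∈ Set.Ioo (0:ℝ) 2, ∀ c : ℝ, 0 < c →
      1 = c ^ (2 - n) * ∫ a in (0:ℝ)..c, a ^ (n - 1) * Real.exp ((a ^ 2 - c ^ 2) / 2) → c = κ n) :
    Filter.Tendsto (fun n => κ n / Real.sqrt n) (nhdsWithin 0 (Set.Ioo 0 2)) (nhds 1) :=
  stmt6_general κ hκ
end

section
/- Let n ∈ (0,2) and define κ̄_n as the unique positive solution of 1 = κ^{2-n} ∫₀^κ a^{n-1} e^{(a²-κ²)/2} da. Then κ̄_n / √(2 ln(1/(2-n))) → 1 as n → 2⁻. -/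
/-!
Subtracting `∫₀^c a e^{(a²-c²)/2} da = 1 - e^{-c²/2}` from the defining equation of `c = κ̄_n`
gives `e^{-c²/2} = ∫₀^c g(a) e^{(a²-c²)/2} da` with `g(a) = c^{2-n} a^{n-1} - a`. By convexity
of `t ↦ (c/a)^t`, `g(a) ≥ (2-n) a (c-a)/c ≥ 0`. Bounding the Gaussian factor by `1` on `[0, c]`
and by `e⁻¹` on `[c - 1/c, c]` shows that `(2-n) e^{c²/2}` lies between `2/c²` and `4e c²`,
so that `|c² - 2 log (1/(2-n))| = O(log log (1/(2-n)))`.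
-/

open Real MeasureTheory Filter Topology Asymptotics

def IsKappaBar (n c : ℝ) : Prop :=
  0 < c ∧ 1 = c ^ (2 - n) * ∫ a in (0:ℝ)..c, a ^ (n - 1) * exp ((a ^ 2 - c ^ 2) / 2)

lemma integral_mul_exp_sq_sub_sq_div_two (c : ℝ) :
    ∫ a in (0:ℝ)..c, a * exp ((a ^ 2 - c ^ 2) / 2) = 1 - exp (-c ^ 2 / 2) := by
  have hderiv (a : ℝ) : HasDerivAt (fun x => exp ((x ^ 2 - c ^ 2) / 2))
      (a * exp ((a ^ 2 - c ^ 2) / 2)) a := by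
    convert (((hasDerivAt_pow 2 a).sub_const (c ^ 2)).div_const 2).exp using 1
    simp; ring
  rw [intervalIntegral.integral_eq_sub_of_hasDerivAt (fun a _ => hderiv a)
    (Continuous.intervalIntegrable (by fun_prop) _ _)]
  norm_num

lemma mul_sub_div_le_rpow_mul_rpow_sub {n a c : ℝ} (hn : n ≤ 2) (ha : 0 ≤ a) (hac : a ≤ c) :
    (2 - n) * a * (c - a) / c ≤ c ^ (2 - n) * a ^ (n - 1) - a := by
  rcases ha.eq_or_lt with rfl | ha
  · rw [mul_zero, zero_mul, zero_div, sub_zero]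
    exact mul_nonneg (rpow_nonneg hac _) (rpow_nonneg le_rfl _)
  have hc : 0 < c := ha.trans_le hac
  have hbern : 1 + (2 - n) * log (c / a) ≤ (c / a) ^ (2 - n) := by
    rw [rpow_def_of_pos (by positivity)]
    linarith [add_one_le_exp (log (c / a) * (2 - n))]
  have hlog : 1 - a / c ≤ log (c / a) := by
    have := log_le_sub_one_of_pos (show 0 < a / c by positivity)
    rw [log_div ha.ne' hc.ne'] at this
    rw [log_div hc.ne' ha.ne']
    linarith
  have hsplit : c ^ (2 - n) * a ^ (n - 1) = a * (c / a) ^ (2 - n) := by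
    rw [div_rpow hc.le ha.le, show n - 1 = 1 - (2 - n) by ring, rpow_sub ha, rpow_one]
    field_simp
  calc (2 - n) * a * (c - a) / c = a * ((2 - n) * (1 - a / c)) := by field_simp
    _ ≤ a * ((2 - n) * log (c / a)) := by gcongr
    _ ≤ c ^ (2 - n) * a ^ (n - 1) - a := by rw [hsplit]; nlinarith

lemma rpow_mul_rpow_sub_nonneg {n a c : ℝ} (hn : n ≤ 2) (ha : 0 ≤ a) (hac : a ≤ c) :
    0 ≤ c ^ (2 - n) * a ^ (n - 1) - a := by
  refine le_trans ?_ (mul_sub_div_le_rpow_mul_rpow_sub hn ha hac)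
  exact div_nonneg (mul_nonneg (mul_nonneg (by linarith) ha) (by linarith)) (ha.trans hac)

lemma intervalIntegrable_rpow_mul_exp {n : ℝ} (hn : 0 < n) (c : ℝ) :
    IntervalIntegrable (fun a => a ^ (n - 1) * exp ((a ^ 2 - c ^ 2) / 2)) volume 0 c :=
  (intervalIntegral.intervalIntegrable_rpow' (by linarith)).mul_continuousOn (by fun_prop)

lemma intervalIntegrable_rpow_sub_mul_exp {n : ℝ} (hn : 0 < n) (c : ℝ) :
    IntervalIntegrable
      (fun a => (c ^ (2 - n) * a ^ (n - 1) - a) * exp ((a ^ 2 - c ^ 2) / 2)) volume 0 c := by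
  simp_rw [sub_mul, mul_assoc]
  exact ((intervalIntegrable_rpow_mul_exp hn c).const_mul _).sub
    (Continuous.intervalIntegrable (by fun_prop) _ _)

lemma sub_mul_le_rpow_mul_rpow_sub_mul_exp {n a c : ℝ} (hn : n ≤ 2) (hc : 0 < c)
    (hc2 : 2 ≤ c ^ 2) (ha : c - 1 / c ≤ a) (hac : a ≤ c) :
    (2 - n) / (2 * exp 1) * (c - a) ≤
      (c ^ (2 - n) * a ^ (n - 1) - a) * exp ((a ^ 2 - c ^ 2) / 2) := by
  have hinv : 1 / c ≤ c / 2 := by rw [div_le_div_iff₀ hc two_pos]; linarith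
  have hg : (2 - n) * (c - a) / 2 ≤ c ^ (2 - n) * a ^ (n - 1) - a := by
    refine le_trans ?_ (mul_sub_div_le_rpow_mul_rpow_sub hn (by linarith) hac)
    rw [div_le_div_iff₀ two_pos hc]
    nlinarith [mul_nonneg (sub_nonneg.2 hn) (sub_nonneg.2 hac)]
  have hE : exp (-1) ≤ exp ((a ^ 2 - c ^ 2) / 2) := by
    rw [exp_le_exp]
    have : (c - 1 / c) ^ 2 ≤ a ^ 2 := pow_le_pow_left₀ (by linarith) ha 2
    have : (c - 1 / c) ^ 2 = c ^ 2 - 2 + (1 / c) ^ 2 := by field_simp; ring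
    nlinarith [sq_nonneg (1 / c)]
  calc (2 - n) / (2 * exp 1) * (c - a) = (2 - n) * (c - a) / 2 * exp (-1) := by
        rw [exp_neg]; field_simp
    _ ≤ _ := mul_le_mul hg hE (exp_nonneg _)
        (le_trans (by nlinarith [sub_nonneg.2 hn, sub_nonneg.2 hac]) hg)

lemma abs_sub_le_of_exp_neg_half_bounds {x y : ℝ} (hx : 0 < x) (hy : 24 ≤ y)
    (hA : exp (-x / 2) ≤ exp (-y / 2) * x / 2)
    (hB : 2 ≤ x → exp (-y / 2) / (4 * exp 1 * x) ≤ exp (-x / 2)) :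
    |x - y| ≤ 12 + 2 * log y := by
  have hx2 : 2 ≤ x := by
    by_contra! hx2
    have : exp (-y / 2) ≤ exp (-1) := exp_le_exp.2 (by linarith)
    have : exp (-1) < exp (-x / 2) := exp_lt_exp.2 (by linarith)
    nlinarith [exp_pos (-y / 2)]
  have hlog4 : log 4 ≤ 3 := by linarith [log_le_sub_one_of_pos (show (0:ℝ) < 4 by norm_num)]
  have hlower : y - x ≤ 2 * log x := by
    have := log_le_log (exp_pos _) hA
    rw [log_exp, log_div (by positivity) two_ne_zero, log_mul (exp_ne_zero _) hx.ne',
      log_exp] at this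
    linarith [log_nonneg one_le_two]
  have hupper : x - y ≤ 8 + 2 * log x := by
    have := log_le_log (by positivity) (hB hx2)
    rw [log_exp, log_div (exp_ne_zero _) (by positivity), log_exp,
      log_mul (by positivity) hx.ne', log_mul (by norm_num) (exp_ne_zero _), log_exp] at this
    linarith
  have hlogx : log x ≤ x / 4 + 2 := by
    have := log_le_sub_one_of_pos (show 0 < x / 4 by positivity)
    rw [log_div hx.ne' (by norm_num)] at this
    linarith
  have hlogxy : log x ≤ 2 + log y := by
    have hlog3 : log 3 ≤ 2 := by linarith [log_le_sub_one_of_pos (show (0:ℝ) < 3 by norm_num)]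
    have : log x ≤ log (3 * y) := log_le_log hx (by linarith)
    rw [log_mul (by norm_num) (by linarith)] at this
    linarith
  rw [abs_le]
  constructor <;> linarith

namespace IsKappaBar

variable {n c : ℝ}

lemma exp_neg_sq_div_two_eq (h : IsKappaBar n c) (hn : 0 < n) :
    exp (-c ^ 2 / 2) =
      ∫ a in (0:ℝ)..c, (c ^ (2 - n) * a ^ (n - 1) - a) * exp ((a ^ 2 - c ^ 2) / 2) := by
  simp_rw [sub_mul, mul_assoc]
  rw [intervalIntegral.integral_sub ((intervalIntegrable_rpow_mul_exp hn c).const_mul _)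
      (Continuous.intervalIntegrable (by fun_prop) _ _),
    intervalIntegral.integral_const_mul, ← h.2, integral_mul_exp_sq_sub_sq_div_two]
  ring

lemma exp_neg_sq_div_two_le (h : IsKappaBar n c) (hn : 1 ≤ n) (hn2 : n ≤ 2) :
    exp (-c ^ 2 / 2) ≤ (2 - n) * c ^ 2 / 2 := by
  have hn0 : 0 < n := by linarith
  have hc := h.1
  calc exp (-c ^ 2 / 2)
      = ∫ a in (0:ℝ)..c, (c ^ (2 - n) * a ^ (n - 1) - a) * exp ((a ^ 2 - c ^ 2) / 2) :=
        h.exp_neg_sq_div_two_eq hn0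
    _ ≤ ∫ a in (0:ℝ)..c, (c ^ (2 - n) * a ^ (n - 1) - a) := by
        refine intervalIntegral.integral_mono_on hc.le (intervalIntegrable_rpow_sub_mul_exp hn0 c)
          ?_ fun a ha => ?_
        · exact ((intervalIntegral.intervalIntegrable_rpow' (by linarith)).const_mul _).sub
            (Continuous.intervalIntegrable (by fun_prop) _ _)
        · refine mul_le_of_le_one_right (rpow_mul_rpow_sub_nonneg hn2 ha.1 ha.2) ?_
          exact exp_le_one_iff.mpr (by nlinarith [ha.1, ha.2])
    _ = c ^ 2 / n - c ^ 2 / 2 := by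
        rw [intervalIntegral.integral_sub
            ((intervalIntegral.intervalIntegrable_rpow' (by linarith)).const_mul _)
            (Continuous.intervalIntegrable (by fun_prop) _ _),
          intervalIntegral.integral_const_mul, integral_rpow (Or.inl (by linarith)), integral_id,
          sub_add_cancel, zero_rpow hn0.ne']
        have hpow : c ^ (2 - n) * c ^ n = c ^ 2 := by
          rw [← rpow_add hc, sub_add_cancel, rpow_two]
        rw [← hpow]
        ring
    _ ≤ (2 - n) * c ^ 2 / 2 := by
        rw [div_sub_div _ _ hn0.ne' two_ne_zero, div_le_div_iff₀ (by positivity) two_pos]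
        nlinarith [mul_nonneg (mul_nonneg (sub_nonneg.2 hn) (sub_nonneg.2 hn2)) (sq_nonneg c)]

lemma div_le_exp_neg_sq_div_two (h : IsKappaBar n c) (hn : 0 < n) (hn2 : n ≤ 2)
    (hc2 : 2 ≤ c ^ 2) : (2 - n) / (4 * exp 1 * c ^ 2) ≤ exp (-c ^ 2 / 2) := by
  have hc := h.1
  have hinv : 1 / c ≤ c / 2 := by rw [div_le_div_iff₀ hc two_pos]; linarith
  have hinv_pos : 0 < 1 / c := one_div_pos.2 hc
  calc (2 - n) / (4 * exp 1 * c ^ 2)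
      = ∫ a in (c - 1 / c)..c, (2 - n) / (2 * exp 1) * (c - a) := by
        rw [intervalIntegral.integral_const_mul, intervalIntegral.integral_sub
          intervalIntegrable_const (Continuous.intervalIntegrable (by fun_prop) _ _),
          intervalIntegral.integral_const, integral_id, smul_eq_mul]
        field_simp
        ring
    _ ≤ ∫ a in (c - 1 / c)..c, (c ^ (2 - n) * a ^ (n - 1) - a) * exp ((a ^ 2 - c ^ 2) / 2) := by
        refine intervalIntegral.integral_mono_on (by linarith)
          (Continuous.intervalIntegrable (by fun_prop) _ _)
          ((intervalIntegrable_rpow_sub_mul_exp hn c).mono_set ?_)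
          fun a ha => sub_mul_le_rpow_mul_rpow_sub_mul_exp hn2 hc hc2 ha.1 ha.2
        rw [Set.uIcc_of_le (by linarith), Set.uIcc_of_le hc.le]
        exact Set.Icc_subset_Icc (by linarith) le_rfl
    _ ≤ ∫ a in (0:ℝ)..c, (c ^ (2 - n) * a ^ (n - 1) - a) * exp ((a ^ 2 - c ^ 2) / 2) := by
        refine intervalIntegral.integral_mono_interval (by linarith) (by linarith) le_rfl ?_
          (intervalIntegrable_rpow_sub_mul_exp hn c)
        refine (ae_restrict_mem measurableSet_Ioc).mono fun a ha => ?_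
        exact mul_nonneg (rpow_mul_rpow_sub_nonneg hn2 ha.1.le ha.2) (exp_nonneg _)
    _ = exp (-c ^ 2 / 2) := (h.exp_neg_sq_div_two_eq hn).symm

lemma abs_sq_sub_le (h : IsKappaBar n c) (hn : 0 < n) (hn2 : n < 2)
    (hy : 24 ≤ 2 * log (1 / (2 - n))) :
    |c ^ 2 - 2 * log (1 / (2 - n))| ≤ 12 + 2 * log (2 * log (1 / (2 - n))) := by
  have h2n : 0 < 2 - n := sub_pos.2 hn2
  have hδ : exp (-(2 * log (1 / (2 - n))) / 2) = 2 - n := by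
    rw [one_div, log_inv, mul_neg, neg_neg, mul_div_cancel_left₀ _ two_ne_zero, exp_log h2n]
  have hn1 : 1 ≤ n := by
    have : exp (-(2 * log (1 / (2 - n))) / 2) ≤ 1 := exp_le_one_iff.2 (by linarith)
    linarith
  refine abs_sub_le_of_exp_neg_half_bounds (pow_pos h.1 2) hy ?_ fun hc2 => ?_
  · rw [hδ]
    exact h.exp_neg_sq_div_two_le hn1 hn2.le
  · rw [hδ]
    exact h.div_le_exp_neg_sq_div_two hn hn2.le hc2

end IsKappaBar

lemma tendsto_div_nhds_one_of_abs_sub_le {α : Type*} {l : Filter α} {u v : α → ℝ} {h : ℝ → ℝ}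
    (hv : Tendsto v l atTop) (hh : h =o[atTop] id) (huv : ∀ᶠ a in l, |u a - v a| ≤ h (v a)) :
    Tendsto (fun a => u a / v a) l (𝓝 1) := by
  have hequiv : u ~[l] v :=
    (IsBigO.of_bound 1 (huv.mono fun a ha => by simpa using ha.trans (le_abs_self _)))
      |>.trans_isLittleO (hh.comp_tendsto hv)
  exact (isEquivalent_iff_tendsto_one (hv.eventually_ne_atTop 0)).1 hequiv

lemma tendsto_log_one_div_sub_nhdsLT (b : ℝ) :
    Tendsto (fun x => log (1 / (b - x))) (𝓝[<] b) atTop := by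
  have hsub : Tendsto (fun x => b - x) (𝓝[<] b) (𝓝[>] 0) := by
    refine tendsto_nhdsWithin_of_tendsto_nhds_of_eventually_within _ ?_ ?_
    · exact ((continuous_sub_left b).tendsto' b 0 (sub_self b)).mono_left nhdsWithin_le_nhds
    · filter_upwards [self_mem_nhdsWithin] with x (hx : x < b)
      exact sub_pos.2 hx
  refine (tendsto_log_atTop.comp (tendsto_inv_nhdsGT_zero.comp hsub)).congr fun x => ?_
  simp only [Function.comp_apply, one_div]

theorem stmt7_general (κ : ℝ → ℝ)
    (hκ : ∀ n ∈ Set.Ioo (0:ℝ) 2, 0 < κ n ∧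
      1 = (κ n) ^ (2 - n) * ∫ a in (0:ℝ)..(κ n), a ^ (n - 1) * Real.exp ((a ^ 2 - (κ n) ^ 2) / 2)) :
    Filter.Tendsto (fun n => κ n / Real.sqrt (2 * Real.log (1 / (2 - n))))
      (nhdsWithin 2 (Set.Ioo 0 2)) (nhds 1) := by
  have hL : Tendsto (fun n => 2 * log (1 / (2 - n))) (𝓝[Set.Ioo 0 2] 2) atTop :=
    ((tendsto_log_one_div_sub_nhdsLT 2).const_mul_atTop two_pos).mono_left
      (nhdsWithin_mono _ Set.Ioo_subset_Iio_self)
  have hsq : Tendsto (fun n => κ n ^ 2 / (2 * log (1 / (2 - n)))) (𝓝[Set.Ioo 0 2] 2) (𝓝 1) := by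
    refine tendsto_div_nhds_one_of_abs_sub_le hL
      ((isLittleO_const_id_atTop 12).add (isLittleO_log_id_atTop.const_mul_left 2)) ?_
    filter_upwards [self_mem_nhdsWithin, hL.eventually_ge_atTop 24] with n hn hy
    exact IsKappaBar.abs_sq_sub_le (hκ n hn) hn.1 hn.2 hy
  have hsqrt := (continuous_sqrt.tendsto 1).comp hsq
  rw [sqrt_one] at hsqrt
  refine hsqrt.congr' ?_
  filter_upwards [self_mem_nhdsWithin] with n hn
  rw [Function.comp_apply, sqrt_div (sq_nonneg _), sqrt_sq (hκ n hn).1.le]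

theorem stmt7 (κ : ℝ → ℝ)
    (hκ : ∀ n ∈ Set.Ioo (0:ℝ) 2, 0 < κ n ∧
      1 = (κ n) ^ (2 - n) * ∫ a in (0:ℝ)..(κ n), a ^ (n - 1) * Real.exp ((a ^ 2 - (κ n) ^ 2) / 2))
    (huniq : ∀ n ∈ Set.Ioo (0:ℝ) 2, ∀ c : ℝ, 0 < c →
      1 = c ^ (2 - n) * ∫ a in (0:ℝ)..c, a ^ (n - 1) * Real.exp ((a ^ 2 - c ^ 2) / 2) → c = κ n) :
    Filter.Tendsto (fun n => κ n / Real.sqrt (2 * Real.log (1 / (2 - n))))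
      (nhdsWithin 2 (Set.Ioo 0 2)) (nhds 1) :=
  stmt7_general κ hκ
end

section
/- Let n ∈ (0,2), E < 0, and let ψ : [0,∞) → (0,∞) be twice continuously differentiable with ψ'(0) = 0, ψ positive, ψ decaying at infinity, satisfying −(2-n) y ψ'(y) = −E ψ(y) + (2-n)² ρ(y) y^{2(1-n)/(2-n)} ψ''(y) on (0,∞) for some measurable ρ with r₁ ≤ ρ ≤ r₂ (0 < r₁ ≤ r₂) making ρ(y) y^{2(1-n)/(2-n)} ψ''(y) continuous. Then ψ is strictly decreasing on (0,∞) and ψ'' changes sign exactly once: there is a unique c > 0 with ψ'' < 0 on (0,c), ψ''(c) = 0, and ψ'' > 0 on (c,∞). -/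
/-!
Put `g y = E ψ y - (2 - n) y ψ'(y)`. The equation reads
`(2 - n)² ρ(y) y^{2(1-n)/(2-n)} ψ''(y) = g y` with a positive coefficient, so `ψ''` and `g` have
the same sign on `(0, ∞)`.

Since `g 0 = E ψ(0) < 0`, we get `ψ'' < 0` and hence `ψ' < 0` just right of `0`. At a positive
zero `z` of `ψ'`, `ψ''(z)` has the sign of `g z = E ψ(z) < 0`, so `ψ'` can only cross zero
downwards and stays negative. At a positive zero `z` of `g`, `ψ''(z) = 0` and therefore
`g'(z) = (E - (2 - n)) ψ'(z) > 0`, so `g` can only cross zero upwards and changes sign at most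
once. It does change sign: otherwise `ψ` is concave and decreasing on `(0, ∞)` and eventually
negative.
-/

open Set Filter Topology SignType

section SignChanges

variable {f : ℝ → ℝ} {a : ℝ}

lemma eventually_pos_nhdsGT_of_deriv_pos {z : ℝ} (hf : 0 < deriv f z) (hz : f z = 0) :
    ∀ᶠ x in 𝓝[>] z, 0 < f x := by
  filter_upwards [nhdsWithin_le_nhds (eventually_nhdsWithin_sign_eq_of_deriv_pos hf hz),
    self_mem_nhdsWithin] with x hx (hzx : z < x)
  rwa [← sign_eq_one_iff, hx, sign_eq_one_iff, sub_pos]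

lemma eventually_neg_nhdsLT_of_deriv_pos {z : ℝ} (hf : 0 < deriv f z) (hz : f z = 0) :
    ∀ᶠ x in 𝓝[<] z, f x < 0 := by
  filter_upwards [nhdsWithin_le_nhds (eventually_nhdsWithin_sign_eq_of_deriv_pos hf hz),
    self_mem_nhdsWithin] with x hx (hxz : x < z)
  rwa [← sign_eq_neg_one_iff, hx, sign_eq_neg_one_iff, sub_neg]

lemma eventually_neg_nhdsGT_of_deriv_neg (hf : ContinuousOn f (Ici a)) (hfa : f a ≤ 0)
    (hf' : ∀ᶠ x in 𝓝[>] a, deriv f x < 0) : ∀ᶠ x in 𝓝[>] a, f x < 0 := by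
  obtain ⟨u, hau, hsub⟩ := mem_nhdsGT_iff_exists_Ioo_subset.1 hf'
  have hanti : StrictAntiOn f (Ico a u) :=
    strictAntiOn_of_deriv_neg (convex_Ico a u) (hf.mono Ico_subset_Ici_self)
      (by rw [interior_Ico]; exact hsub)
  filter_upwards [Ioo_mem_nhdsGT hau] with x hx
  exact (hanti ⟨le_rfl, hau⟩ ⟨hx.1.le, hx.2⟩ hx.1).trans_le hfa

lemma exists_nonpos_of_deriv_le_neg {C : ℝ} (hC : C < 0) (hf : ContinuousOn f (Ici a))
    (hf' : DifferentiableOn ℝ f (Ioi a)) (hle : ∀ x > a, deriv f x ≤ C) : ∃ y ≥ a, f y ≤ 0 := by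
  have hay : a ≤ a + |f a| / -C := le_add_of_nonneg_right
    (div_nonneg (abs_nonneg _) (neg_nonneg.2 hC.le))
  refine ⟨_, hay, ?_⟩
  have := (convex_Ici a).image_sub_le_mul_sub_of_deriv_le hf (by rwa [interior_Ici])
    (by rwa [interior_Ici]) a self_mem_Ici _ hay hay
  have hCt : C * (|f a| / -C) = -|f a| := by
    rw [mul_div_assoc', div_neg, mul_div_cancel_left₀ _ hC.ne]
  rw [add_sub_cancel_left, hCt] at this
  linarith [le_abs_self (f a)]

def CrossesZeroUpwardOn (f : ℝ → ℝ) (s : Set ℝ) : Prop :=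
  ∀ z ∈ s, f z = 0 → 0 < deriv f z

namespace CrossesZeroUpwardOn

lemma eventually_pos_nhdsGT (hup : CrossesZeroUpwardOn f (Ioi a)) (hf : ContinuousOn f (Ioi a))
    {z : ℝ} (hz : a < z) (hfz : 0 ≤ f z) :
    ∀ᶠ x in 𝓝[>] z, 0 < f x := by
  rcases hfz.lt_or_eq with hfz | hfz
  · exact nhdsWithin_le_nhds
      ((hf.continuousAt (Ioi_mem_nhds hz)).eventually (lt_mem_nhds hfz))
  · exact eventually_pos_nhdsGT_of_deriv_pos (hup z hz hfz.symm) hfz.symm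

lemma pos_of_nonneg (hup : CrossesZeroUpwardOn f (Ioi a)) (hf : ContinuousOn f (Ioi a))
    {x y : ℝ} (hax : a < x) (hfx : 0 ≤ f x) (hxy : x < y) : 0 < f y := by
  have hnonneg : Icc x y ⊆ f ⁻¹' Ici 0 := by
    refine IsClosed.Icc_subset_of_forall_mem_nhdsWithin ?_ hfx fun z hz => ?_
    · rw [inter_comm]
      exact (hf.mono fun w hw => hax.trans_le hw.1).preimage_isClosed_of_isClosed
        isClosed_Icc isClosed_Ici
    · exact (hup.eventually_pos_nhdsGT hf (hax.trans_le hz.2.1) hz.1).mono fun _ h => h.le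
  refine (hnonneg ⟨hxy.le, le_rfl⟩).lt_of_ne' fun hfy => ?_
  obtain ⟨w, hw, hxw⟩ :=
    ((eventually_neg_nhdsLT_of_deriv_pos (hup y (hax.trans hxy) hfy) hfy).and
      (Ioo_mem_nhdsLT hxy)).exists
  exact hw.not_ge (hnonneg ⟨hxw.1.le, hxw.2.le⟩)

lemma pos_of_eventually_pos (hup : CrossesZeroUpwardOn f (Ioi a)) (hf : ContinuousOn f (Ioi a))
    (hev : ∀ᶠ x in 𝓝[>] a, 0 < f x) {y : ℝ} (hay : a < y) :
    0 < f y := by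
  obtain ⟨x, hfx, hx⟩ := (hev.and (Ioo_mem_nhdsGT hay)).exists
  exact hup.pos_of_nonneg hf hx.1 hfx.le hx.2

lemma exists_sign_change (hup : CrossesZeroUpwardOn f (Ioi a)) (hf : ContinuousOn f (Ioi a))
    (hev : ∀ᶠ x in 𝓝[>] a, f x < 0) (hne : ∃ y > a, 0 ≤ f y) :
    ∃ c > a, (∀ y ∈ Ioo a c, f y < 0) ∧ f c = 0 ∧ ∀ y ∈ Ioi c, 0 < f y := by
  set S := {y | a < y ∧ 0 ≤ f y}
  have hS : S.Nonempty := hne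
  obtain ⟨u, hau, hsub⟩ := mem_nhdsGT_iff_exists_Ioo_subset.1 hev
  have huc : u ≤ sInf S := le_csInf hS fun y hy =>
    not_lt.1 fun hyu => (hsub ⟨hy.1, hyu⟩ : f y < 0).not_ge hy.2
  have hac : a < sInf S := hau.trans_le huc
  have hneg : ∀ y ∈ Ioo a (sInf S), f y < 0 := fun y hy =>
    not_le.1 fun hfy => hy.2.not_ge (csInf_le ⟨a, fun _ h => h.1.le⟩ ⟨hy.1, hfy⟩)
  have hpos : ∀ y ∈ Ioi (sInf S), 0 < f y := fun y hy => by
    obtain ⟨x, hx, hxy⟩ := exists_lt_of_csInf_lt hS hy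
    exact hup.pos_of_nonneg hf hx.1 hx.2 hxy
  have hcont : ContinuousAt f (sInf S) := hf.continuousAt (Ioi_mem_nhds hac)
  refine ⟨sInf S, hac, hneg, le_antisymm ?_ ?_, hpos⟩
  · exact le_of_tendsto (hcont.tendsto.mono_left nhdsWithin_le_nhds)
      (eventually_of_mem (Ioo_mem_nhdsLT hac) fun y hy => (hneg y hy).le)
  · exact ge_of_tendsto (hcont.tendsto.mono_left nhdsWithin_le_nhds)
      (eventually_of_mem self_mem_nhdsWithin fun y hy => (hpos y hy).le)

end CrossesZeroUpwardOn

end SignChanges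

section InflectionPoint

variable {n E : ℝ} {ψ : ℝ → ℝ}

noncomputable def inflectionNumerator (n E : ℝ) (ψ : ℝ → ℝ) (y : ℝ) : ℝ :=
  E * ψ y - (2 - n) * (y * deriv ψ y)

lemma sign_deriv_deriv_eq_sign_inflectionNumerator {ρ : ℝ → ℝ} {y : ℝ} (hn : n ≠ 2)
    (hρ : 0 < ρ y) (hy : 0 < y)
    (heq : -(2 - n) * y * deriv ψ y
        = -E * ψ y + (2 - n) ^ 2 * ρ y * y ^ (2 * (1 - n) / (2 - n)) * deriv (deriv ψ) y) :
    sign (deriv (deriv ψ) y) = sign (inflectionNumerator n E ψ y) := by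
  have hD : 0 < (2 - n) ^ 2 * ρ y * y ^ (2 * (1 - n) / (2 - n)) := by
    have := sub_ne_zero.2 hn.symm
    positivity
  have hnum : inflectionNumerator n E ψ y
      = (2 - n) ^ 2 * ρ y * y ^ (2 * (1 - n) / (2 - n)) * deriv (deriv ψ) y := by
    rw [inflectionNumerator]
    linarith
  rw [hnum, sign_mul, sign_pos hD, one_mul]

lemma hasDerivAt_inflectionNumerator {y : ℝ} (h₁ : DifferentiableAt ℝ ψ y)
    (h₂ : DifferentiableAt ℝ (deriv ψ) y) :
    HasDerivAt (inflectionNumerator n E ψ)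
      ((E - (2 - n)) * deriv ψ y - (2 - n) * (y * deriv (deriv ψ) y)) y := by
  refine ((h₁.hasDerivAt.const_mul E).sub
    (((hasDerivAt_id' y).mul h₂.hasDerivAt).const_mul (2 - n))).congr_deriv ?_
  ring

lemma continuous_inflectionNumerator (hψ : ContDiff ℝ 2 ψ) :
    Continuous (inflectionNumerator n E ψ) :=
  continuous_iff_continuousAt.2 fun y => (hasDerivAt_inflectionNumerator
    (hψ.differentiable two_ne_zero y) (hψ.differentiable_deriv_two y)).continuousAt

lemma inflectionNumerator_eventually_neg (hE : E < 0) (hψ : ContDiff ℝ 2 ψ)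
    (hψ0 : deriv ψ 0 = 0) (hpos : 0 < ψ 0) :
    ∀ᶠ y in 𝓝[>] 0, inflectionNumerator n E ψ y < 0 := by
  have h0 : inflectionNumerator n E ψ 0 < 0 := by
    simpa [inflectionNumerator, hψ0] using mul_neg_of_neg_of_pos hE hpos
  exact nhdsWithin_le_nhds
    ((continuous_inflectionNumerator hψ).continuousAt.eventually (gt_mem_nhds h0))

lemma deriv_neg_of_sign_eq (hE : E < 0) (hψ : ContDiff ℝ 2 ψ) (hψ0 : deriv ψ 0 = 0)
    (hpos : ∀ y, 0 ≤ y → 0 < ψ y)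
    (hsign : ∀ y > 0, sign (deriv (deriv ψ) y) = sign (inflectionNumerator n E ψ y))
    {y : ℝ} (hy : 0 < y) : deriv ψ y < 0 := by
  have hcont : Continuous (deriv ψ) := hψ.differentiable_deriv_two.continuous
  have hψ'' : ∀ᶠ y in 𝓝[>] 0, deriv (deriv ψ) y < 0 := by
    filter_upwards [inflectionNumerator_eventually_neg hE hψ hψ0 (hpos 0 le_rfl),
      self_mem_nhdsWithin] with y hg hy
    rwa [← sign_eq_neg_one_iff, hsign y hy, sign_eq_neg_one_iff]
  have hψ' := eventually_neg_nhdsGT_of_deriv_neg hcont.continuousOn hψ0.le hψ''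
  have hup : CrossesZeroUpwardOn (fun y => -deriv ψ y) (Ioi 0) := fun z hz hz0 => by
    have hg : inflectionNumerator n E ψ z < 0 := by
      simpa [inflectionNumerator, neg_eq_zero.1 hz0] using
        mul_neg_of_neg_of_pos hE (hpos z hz.le)
    rwa [deriv.fun_neg, neg_pos, ← sign_eq_neg_one_iff, hsign z hz, sign_eq_neg_one_iff]
  exact neg_pos.1 (hup.pos_of_eventually_pos hcont.neg.continuousOn
    (hψ'.mono fun _ h => neg_pos.2 h) hy)

lemma exists_inflectionNumerator_nonneg (hψ : ContDiff ℝ 2 ψ) (hpos : ∀ y, 0 ≤ y → 0 < ψ y)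
    (hsign : ∀ y > 0, sign (deriv (deriv ψ) y) = sign (inflectionNumerator n E ψ y))
    (hψ' : ∀ y > 0, deriv ψ y < 0) : ∃ y > 0, 0 ≤ inflectionNumerator n E ψ y := by
  by_contra! hneg
  have hanti : StrictAntiOn (deriv ψ) (Ici 1) := by
    refine strictAntiOn_of_deriv_neg (convex_Ici 1)
      hψ.differentiable_deriv_two.continuous.continuousOn fun x hx => ?_
    rw [interior_Ici] at hx
    have hx0 : 0 < x := one_pos.trans hx
    rw [← sign_eq_neg_one_iff, hsign x hx0, sign_eq_neg_one_iff]
    exact hneg x hx0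
  have hdiff : Differentiable ℝ ψ := hψ.differentiable two_ne_zero
  obtain ⟨y, hy, hψy⟩ := exists_nonpos_of_deriv_le_neg (hψ' 1 one_pos)
    hdiff.continuous.continuousOn hdiff.differentiableOn
    fun x hx => (hanti self_mem_Ici hx.le hx).le
  exact (hpos y (zero_le_one.trans hy)).not_ge hψy

lemma crossesZeroUpwardOn_inflectionNumerator (hn : n < 2) (hE : E < 0) (hψ : ContDiff ℝ 2 ψ)
    (hsign : ∀ y > 0, sign (deriv (deriv ψ) y) = sign (inflectionNumerator n E ψ y))
    (hψ' : ∀ y > 0, deriv ψ y < 0) :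
    CrossesZeroUpwardOn (inflectionNumerator n E ψ) (Ioi 0) := by
  intro z hz hz0
  have hψ'' : deriv (deriv ψ) z = 0 := by
    rw [← sign_eq_zero_iff, hsign z hz, sign_eq_zero_iff, hz0]
  rw [(hasDerivAt_inflectionNumerator (hψ.differentiable two_ne_zero z)
    (hψ.differentiable_deriv_two z)).deriv, hψ'', mul_zero, mul_zero, sub_zero]
  exact mul_pos_of_neg_of_neg (by linarith) (hψ' z hz)

end InflectionPoint

theorem stmt12_general (n E r₁ r₂ : ℝ) (hn : n ∈ Set.Ioo (0:ℝ) 2) (hE : E < 0)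
    (hr : 0 < r₁)
    (ψ ρ : ℝ → ℝ) (hψ : ContDiff ℝ 2 ψ)
    (hψ0 : deriv ψ 0 = 0) (hpos : ∀ y, 0 ≤ y → 0 < ψ y)
    (hρb : ∀ y, ρ y ∈ Set.Icc r₁ r₂)
    (heq : ∀ y, 0 < y →
      -(2 - n) * y * deriv ψ y
        = -E * ψ y + (2 - n) ^ 2 * ρ y * y ^ (2 * (1 - n) / (2 - n)) * deriv (deriv ψ) y) :
    StrictAntiOn ψ (Set.Ioi 0) ∧
      ∃! c : ℝ, 0 < c ∧ (∀ y ∈ Set.Ioo 0 c, deriv (deriv ψ) y < 0) ∧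
        deriv (deriv ψ) c = 0 ∧ ∀ y ∈ Set.Ioi c, 0 < deriv (deriv ψ) y := by
  have hsign : ∀ y > 0, sign (deriv (deriv ψ) y)
      = sign (inflectionNumerator n E ψ y) := fun y hy =>
    sign_deriv_deriv_eq_sign_inflectionNumerator hn.2.ne (hr.trans_le (hρb y).1) hy (heq y hy)
  have hψ' : ∀ y > 0, deriv ψ y < 0 := fun y hy =>
    deriv_neg_of_sign_eq hE hψ hψ0 hpos hsign hy
  refine ⟨strictAntiOn_of_deriv_neg (convex_Ioi 0) hψ.continuous.continuousOn
    (by rwa [interior_Ioi]), ?_⟩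
  obtain ⟨c, hc, hneg, hzero, hgpos⟩ :=
    (crossesZeroUpwardOn_inflectionNumerator hn.2 hE hψ hsign hψ').exists_sign_change
      (continuous_inflectionNumerator hψ).continuousOn
      (inflectionNumerator_eventually_neg hE hψ hψ0 (hpos 0 le_rfl))
      (exists_inflectionNumerator_nonneg hψ hpos hsign hψ')
  have hψ''neg : ∀ y ∈ Ioo 0 c, deriv (deriv ψ) y < 0 := fun y hy => by
    rw [← sign_eq_neg_one_iff, hsign y hy.1, sign_eq_neg_one_iff]
    exact hneg y hy
  have hψ''pos : ∀ y ∈ Ioi c, 0 < deriv (deriv ψ) y := fun y hy => by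
    rw [← sign_eq_one_iff, hsign y (hc.trans hy), sign_eq_one_iff]
    exact hgpos y hy
  refine ⟨c, ⟨hc, hψ''neg, by
    rwa [← sign_eq_zero_iff, hsign c hc, sign_eq_zero_iff], hψ''pos⟩, ?_⟩
  rintro c' ⟨hc', -, hzero', -⟩
  rcases lt_trichotomy c' c with h | rfl | h
  · exact absurd hzero' (hψ''neg c' ⟨hc', h⟩).ne
  · rfl
  · exact absurd hzero' (hψ''pos c' h).ne'

theorem stmt12 (n E r₁ r₂ : ℝ) (hn : n ∈ Set.Ioo (0:ℝ) 2) (hE : E < 0)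
    (hr : 0 < r₁) (hr' : r₁ ≤ r₂)
    (ψ ρ : ℝ → ℝ) (hψ : ContDiff ℝ 2 ψ)
    (hψ0 : deriv ψ 0 = 0) (hpos : ∀ y, 0 ≤ y → 0 < ψ y)
    (hdecay : Filter.Tendsto ψ Filter.atTop (nhds 0))
    (hρm : Measurable ρ) (hρb : ∀ y, ρ y ∈ Set.Icc r₁ r₂)
    (hcont : ContinuousOn
      (fun y => ρ y * y ^ (2 * (1 - n) / (2 - n)) * deriv (deriv ψ) y) (Set.Ioi 0))
    (heq : ∀ y, 0 < y →
      -(2 - n) * y * deriv ψ y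
        = -E * ψ y + (2 - n) ^ 2 * ρ y * y ^ (2 * (1 - n) / (2 - n)) * deriv (deriv ψ) y) :
    StrictAntiOn ψ (Set.Ioi 0) ∧
      ∃! c : ℝ, 0 < c ∧ (∀ y ∈ Set.Ioo 0 c, deriv (deriv ψ) y < 0) ∧
        deriv (deriv ψ) c = 0 ∧ ∀ y ∈ Set.Ioi c, 0 < deriv (deriv ψ) y :=
  stmt12_general n E r₁ r₂ hn hE hr ψ ρ hψ hψ0 hpos hρb heq
end

section
/- Let n ∈ (0,2), r₁ ∈ (0,∞), and R : (0,∞) → [r₁, r₂]. For v₊(x) := ∫_x^∞ z^{1-n} e^{-∫₀^z v/R(v) dv} dz, both constant functions and v₊ solve the homogeneous equation x g'(x) + R(x)((n-1)/x g'(x) + g''(x)) = 0 on any interval where R is continuous; moreover v₊ is finite, positive, and strictly decreasing on (0,∞). -/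
open Real MeasureTheory Topology

theorem stmt13 (n r₁ r₂ : ℝ) (hn : n ∈ Set.Ioo (0:ℝ) 2) (hr : 0 < r₁) (hr' : r₁ ≤ r₂)
    (R : ℝ → ℝ) (hR : Measurable R) (hRb : ∀ x, 0 < x → R x ∈ Set.Icc r₁ r₂)
    (vplus : ℝ → ℝ)
    (hv : ∀ x : ℝ, vplus x
      = ∫ z in Set.Ioi x, z ^ (1 - n) * Real.exp (-∫ v in (0:ℝ)..z, v / R v)) :
    (∀ x : ℝ, 0 < x → IntegrableOn
        (fun z => z ^ (1 - n) * Real.exp (-∫ v in (0:ℝ)..z, v / R v)) (Set.Ioi x)) ∧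
    (∀ x : ℝ, 0 < x → 0 < vplus x) ∧
    StrictAntiOn vplus (Set.Ioi 0) ∧
    (∀ c : ℝ, ∀ x : ℝ, 0 < x →
      x * deriv (fun _ : ℝ => c) x
        + R x * ((n - 1) / x * deriv (fun _ : ℝ => c) x + deriv (deriv (fun _ : ℝ => c)) x) = 0) ∧
    (∀ s : Set ℝ, IsOpen s → s ⊆ Set.Ioi 0 → ContinuousOn R s → ∀ x ∈ s,
      x * deriv vplus x + R x * ((n - 1) / x * deriv vplus x + deriv (deriv vplus) x) = 0) := by
  obtain ⟨hn0, hn2⟩ := hn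
  have hr₂ : 0 < r₂ := hr.trans_le hr'
  set F : ℝ → ℝ := fun z => ∫ v in (0:ℝ)..z, v / R v with hFdef
  set f : ℝ → ℝ := fun z => z ^ (1 - n) * Real.exp (-F z) with hfdef
  have hgm : Measurable (fun v : ℝ => v / R v) := measurable_id.div hR
  have hgnn : ∀ v : ℝ, 0 ≤ v → 0 ≤ v / R v := by
    intro v hv
    rcases eq_or_lt_of_le hv with h | h
    · simp [← h]
    · exact div_nonneg hv (le_trans hr.le (hRb v h).1)
  have hgii : ∀ a b : ℝ, 0 ≤ a → 0 ≤ b →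
      IntervalIntegrable (fun v => v / R v) volume a b := by
    intro a b ha hb
    rw [intervalIntegrable_iff, Set.uIoc]
    refine Measure.integrableOn_of_bounded measure_Ioc_lt_top.ne
      hgm.aestronglyMeasurable (M := max a b / r₁) ?_
    refine (ae_restrict_iff' measurableSet_Ioc).2 (Filter.Eventually.of_forall ?_)
    intro v hvmem
    have hv0 : 0 < v := lt_of_le_of_lt (le_min ha hb) hvmem.1
    have hRv := hRb v hv0
    rw [Real.norm_eq_abs, abs_of_nonneg (hgnn v hv0.le)]
    calc v / R v ≤ v / r₁ := by gcongr; exact hRv.1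
      _ ≤ max a b / r₁ := by gcongr; exact hvmem.2
  have hFlb : ∀ z : ℝ, 0 ≤ z → z ^ 2 / (2 * r₂) ≤ F z := by
    intro z hz
    have h1 : (∫ v in (0:ℝ)..z, v / r₂) ≤ F z := by
      refine intervalIntegral.integral_mono_on hz
        (intervalIntegral.intervalIntegrable_id.div_const r₂) (hgii 0 z le_rfl hz) ?_
      intro v hvmem
      rcases eq_or_lt_of_le hvmem.1 with h | h
      · simp [← h]
      · have hRv := hRb v h
        gcongr
        · exact lt_of_lt_of_le hr hRv.1
        · exact hRv.2
    have h2 : (∫ v in (0:ℝ)..z, v / r₂) = z ^ 2 / (2 * r₂) := by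
      rw [intervalIntegral.integral_div, integral_id]
      ring
    linarith
  have hmeasf : ∀ x : ℝ, 0 < x →
      AEStronglyMeasurable f (volume.restrict (Set.Ioi x)) := by
    intro x hx
    have hFm : Monotone (fun z : ℝ => ∫ v in (0:ℝ)..max z 0, v / R v) := by
      intro z₁ z₂ hz
      have hadj := intervalIntegral.integral_add_adjacent_intervals
        (hgii 0 (max z₁ 0) le_rfl (le_max_right _ _))
        (hgii (max z₁ 0) (max z₂ 0) (le_max_right _ _) (le_max_right _ _))
      have hnn : 0 ≤ ∫ v in (max z₁ 0)..(max z₂ 0), v / R v := by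
        refine intervalIntegral.integral_nonneg (max_le_max hz le_rfl) ?_
        intro v hvmem
        exact hgnn v (le_trans (le_max_right _ _) hvmem.1)
      simp only []
      linarith [hadj]
    have hmeas : Measurable (fun z : ℝ => z ^ (1 - n) *
        Real.exp (-∫ v in (0:ℝ)..max z 0, v / R v)) :=
      (measurable_id.pow_const _).mul (hFm.measurable.neg.exp)
    refine hmeas.aestronglyMeasurable.congr ?_
    refine (ae_restrict_iff' measurableSet_Ioi).2 (Filter.Eventually.of_forall ?_)
    intro z hz
    simp [hfdef, hFdef, max_eq_left (le_of_lt (hx.trans hz))]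
  have hInt : ∀ x : ℝ, 0 < x → IntegrableOn f (Set.Ioi x) := by
    intro x hx
    have hdom : IntegrableOn (fun z : ℝ => z ^ (1 - n) *
        Real.exp (-(1 / (2 * r₂)) * z ^ 2)) (Set.Ioi x) :=
      (integrableOn_rpow_mul_exp_neg_mul_sq (by positivity) (by linarith : (-1:ℝ) < 1 - n)).mono_set
        (Set.Ioi_subset_Ioi hx.le)
    refine hdom.mono' (hmeasf x hx) ?_
    refine (ae_restrict_iff' measurableSet_Ioi).2 (Filter.Eventually.of_forall ?_)
    intro z hz
    have hz0 : 0 < z := hx.trans hz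
    rw [Real.norm_eq_abs, abs_of_nonneg (by positivity)]
    have hb : -F z ≤ -(1 / (2 * r₂)) * z ^ 2 := by
      have h1 := hFlb z hz0.le
      have h2 : -(1 / (2 * r₂)) * z ^ 2 = -(z ^ 2 / (2 * r₂)) := by ring
      linarith
    exact mul_le_mul_of_nonneg_left (Real.exp_le_exp.2 hb) (Real.rpow_nonneg hz0.le _)
  have hfpos : ∀ z : ℝ, 0 < z → 0 < f z := by
    intro z hz
    exact mul_pos (Real.rpow_pos_of_pos hz _) (Real.exp_pos _)
  have hIocpos : ∀ a b : ℝ, 0 < a → a < b → 0 < ∫ z in Set.Ioc a b, f z := by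
    intro a b ha hab
    have hint : IntegrableOn f (Set.Ioc a b) :=
      (hInt a ha).mono_set Set.Ioc_subset_Ioi_self
    have hnn : 0 ≤ᵐ[volume.restrict (Set.Ioc a b)] f :=
      (ae_restrict_iff' measurableSet_Ioc).2 (Filter.Eventually.of_forall
        fun z hz => (hfpos z (ha.trans hz.1)).le)
    rw [setIntegral_pos_iff_support_of_nonneg_ae hnn hint]
    have hsub : Set.Ioc a b ⊆ Function.support f :=
      fun z hz => (hfpos z (ha.trans hz.1)).ne'
    rw [Set.inter_eq_self_of_subset_right hsub, Real.volume_Ioc]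
    exact ENNReal.ofReal_pos.2 (sub_pos.2 hab)
  have hpos : ∀ x : ℝ, 0 < x → 0 < vplus x := by
    intro x hx
    rw [hv x]
    have hnn : 0 ≤ᵐ[volume.restrict (Set.Ioi x)] f :=
      (ae_restrict_iff' measurableSet_Ioi).2 (Filter.Eventually.of_forall
        fun z hz => (hfpos z (hx.trans hz)).le)
    rw [setIntegral_pos_iff_support_of_nonneg_ae hnn (hInt x hx)]
    have hsub : Set.Ioi x ⊆ Function.support f :=
      fun z hz => (hfpos z (hx.trans hz)).ne'
    rw [Set.inter_eq_self_of_subset_right hsub, Real.volume_Ioi]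
    exact ENNReal.zero_lt_top
  have hsplit : ∀ a b : ℝ, 0 < a → a < b →
      ∫ z in Set.Ioi a, f z = (∫ z in Set.Ioc a b, f z) + ∫ z in Set.Ioi b, f z := by
    intro a b ha hab
    rw [← setIntegral_union Set.Ioc_disjoint_Ioi_same measurableSet_Ioi
      ((hInt a ha).mono_set Set.Ioc_subset_Ioi_self) (hInt b (ha.trans hab)),
      Set.Ioc_union_Ioi_eq_Ioi hab.le]
  have hanti : StrictAntiOn vplus (Set.Ioi 0) := by
    intro a ha b hb hab
    rw [hv a, hv b]
    have := hsplit a b ha hab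
    have := hIocpos a b ha hab
    linarith
  refine ⟨hInt, hpos, hanti, ?_, ?_⟩
  · intro c x hx
    simp [deriv_const']
  · intro s hs hsub hRc x hx
    have key : ∀ y ∈ s, HasDerivAt vplus (-(f y)) y := by
      intro y hy
      have hy0 : 0 < y := hsub hy
      have ha : 0 < y / 2 := by linarith
      have hay : y / 2 < y := by linarith
      have hgc : ContinuousAt (fun v : ℝ => v / R v) y :=
        continuousAt_id.div (hRc.continuousAt (hs.mem_nhds hy))
          (ne_of_gt (lt_of_lt_of_le hr (hRb y hy0).1))
      have hFd : HasDerivAt F (y / R y) y :=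
        intervalIntegral.integral_hasDerivAt_right (hgii 0 y le_rfl hy0.le)
          hgm.aestronglyMeasurable.stronglyMeasurableAtFilter hgc
      have hfc : ContinuousAt f y :=
        (Real.continuousAt_rpow_const y (1 - n) (Or.inl hy0.ne')).mul
          (Real.continuous_exp.continuousAt.comp hFd.continuousAt.neg)
      have hfi : IntervalIntegrable f volume (y / 2) y :=
        (intervalIntegrable_iff_integrableOn_Ioc_of_le hay.le).2
          ((hInt (y / 2) ha).mono_set Set.Ioc_subset_Ioi_self)
      have hsm : StronglyMeasurableAtFilter f (𝓝 y) :=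
        ⟨Set.Ioi (y / 2), Ioi_mem_nhds hay, hmeasf (y / 2) ha⟩
      have hFTC : HasDerivAt (fun u => ∫ t in (y / 2)..u, f t) (f y) y :=
        intervalIntegral.integral_hasDerivAt_right hfi hsm hfc
      have heq : (fun u => vplus (y / 2) - ∫ t in (y / 2)..u, f t) =ᶠ[𝓝 y] vplus := by
        filter_upwards [Ioi_mem_nhds hay] with u hu
        rw [hv u, hv (y / 2), intervalIntegral.integral_of_le (le_of_lt hu),
          hsplit (y / 2) u ha hu]
        ring
      have := ((hasDerivAt_const y (vplus (y / 2))).sub hFTC).congr_of_eventuallyEq heq.symm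
      simpa using this
    have hx0 : 0 < x := hsub hx
    have hRx : R x ≠ 0 := ne_of_gt (lt_of_lt_of_le hr (hRb x hx0).1)
    have hgc : ContinuousAt (fun v : ℝ => v / R v) x :=
      continuousAt_id.div (hRc.continuousAt (hs.mem_nhds hx)) hRx
    have hFd : HasDerivAt F (x / R x) x :=
      intervalIntegral.integral_hasDerivAt_right (hgii 0 x le_rfl hx0.le)
        hgm.aestronglyMeasurable.stronglyMeasurableAtFilter hgc
    have hfd : HasDerivAt f
        ((1 - n) * x ^ (1 - n - 1) * Real.exp (-F x)
          + x ^ (1 - n) * (Real.exp (-F x) * -(x / R x))) x :=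
      (Real.hasDerivAt_rpow_const (Or.inl hx0.ne')).mul (hFd.neg.exp)
    have hd1 : deriv vplus x = -(f x) := (key x hx).deriv
    have hev : deriv vplus =ᶠ[𝓝 x] (fun y => -(f y)) := by
      filter_upwards [hs.mem_nhds hx] with y hy
      exact (key y hy).deriv
    have hd2 : deriv (deriv vplus) x
        = -((1 - n) * x ^ (1 - n - 1) * Real.exp (-F x)
          + x ^ (1 - n) * (Real.exp (-F x) * -(x / R x))) := by
      rw [hev.deriv_eq]
      exact hfd.neg.deriv
    rw [hd1, hd2]
    have hA : x ^ (1 - n - 1) = x ^ (1 - n) / x := by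
      rw [Real.rpow_sub hx0, Real.rpow_one]
    rw [hfdef]
    simp only []
    rw [hA]
    field_simp
    ring
end

section
/- Let n ∈ (0,2), r₁ > 0, and R : (0,∞) → [r₁, r₂] measurable. Then ∫₀^∞ G(x,z) dx = (z^{n-1}/R(z)) e^{∫₀^z v/R(v) dv} ∫_z^∞ a^{2-n} e^{-∫₀^a v/R(v) dv} da, where G(x,z) = c₋(z)·1_{x≤z} + c₊(z) v₊(x)·1_{x>z} is the Green function kernel with c₊(z) = (z^{n-1}/R(z)) e^{∫₀^z v/R(v) dv}, c₋(z) = c₊(z) v₊(z), and v₊(x) = ∫_x^∞ u^{1-n} e^{-∫₀^u v/R(v) dv} du. -/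
open Real MeasureTheory Set

/-!
Put `φ(u) = u^(1-n) e^(-F(u))` with `F(u) = ∫₀^u v/R(v) dv`, so that `v₊(x) = ∫_x^∞ φ`.
The integrand equals `c₊(z) v₊(z)` on `(0, z]`, and by Fubini `∫_z^∞ v₊ = ∫_z^∞ (u - z) φ(u) du`;
adding `z v₊(z) = ∫_z^∞ z φ` leaves `c₊(z) ∫_z^∞ u φ(u) du`. All integrals converge because
`F(u) ≥ u²/(2 r₂)` makes `φ` and `u φ` Gaussian-dominated.
-/

section TailIntegral

variable {φ : ℝ → ℝ} {z : ℝ}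

lemma aestronglyMeasurable_of_integrableOn_sub_mul
    (h : IntegrableOn (fun u => (u - z) * φ u) (Ioi z)) :
    AEStronglyMeasurable φ (volume.restrict (Ioi z)) := by
  refine ((measurable_id.sub_const z).inv.aestronglyMeasurable.mul
    h.aestronglyMeasurable).congr ?_
  filter_upwards [ae_restrict_mem measurableSet_Ioi] with u hu
  exact inv_mul_cancel_left₀ (sub_ne_zero.mpr (ne_of_gt hu)) _

lemma indicator_lt_section_left (x : ℝ) :
    (fun u => {p : ℝ × ℝ | p.1 < p.2}.indicator (fun p => φ p.2) (x, u)) = (Ioi x).indicator φ := by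
  ext u; simp [indicator_apply]

lemma indicator_lt_section_right (u : ℝ) :
    (fun x => {p : ℝ × ℝ | p.1 < p.2}.indicator (fun p => φ p.2) (x, u))
      = (Iio u).indicator fun _ => φ u := by
  ext x; simp [indicator_apply]

lemma integral_indicator_lt_left (x : ℝ) (hx : z ≤ x) :
    ∫ u, {p : ℝ × ℝ | p.1 < p.2}.indicator (fun p => φ p.2) (x, u) ∂volume.restrict (Ioi z)
      = ∫ u in Ioi x, φ u := by
  rw [indicator_lt_section_left, integral_indicator measurableSet_Ioi,
    Measure.restrict_restrict measurableSet_Ioi, inter_eq_left.mpr (Ioi_subset_Ioi hx)]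

lemma integral_indicator_lt_right (u : ℝ) (hu : z ≤ u) :
    ∫ x, {p : ℝ × ℝ | p.1 < p.2}.indicator (fun p => φ p.2) (x, u) ∂volume.restrict (Ioi z)
      = (u - z) * φ u := by
  rw [indicator_lt_section_right, integral_indicator measurableSet_Iio, setIntegral_const,
    measureReal_def, Measure.restrict_apply measurableSet_Iio, Iio_inter_Ioi, Real.volume_Ioo,
    ENNReal.toReal_ofReal (sub_nonneg.mpr hu), smul_eq_mul]

lemma integrable_indicator_lt (h : IntegrableOn (fun u => (u - z) * φ u) (Ioi z)) :
    Integrable ({p : ℝ × ℝ | p.1 < p.2}.indicator fun p => φ p.2)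
      ((volume.restrict (Ioi z)).prod (volume.restrict (Ioi z))) := by
  have hmeas : AEStronglyMeasurable ({p : ℝ × ℝ | p.1 < p.2}.indicator fun p => φ p.2)
      ((volume.restrict (Ioi z)).prod (volume.restrict (Ioi z))) :=
    (aestronglyMeasurable_of_integrableOn_sub_mul h).comp_snd.indicator
      (measurableSet_lt measurable_fst measurable_snd)
  refine (integrable_prod_iff' hmeas).mpr ⟨?_, ?_⟩
  · filter_upwards with u
    rw [indicator_lt_section_right, integrable_indicator_iff measurableSet_Iio]
    exact integrableOn_const (by simp [Measure.restrict_apply measurableSet_Iio, Iio_inter_Ioi])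
  · refine h.norm.congr ?_
    filter_upwards [ae_restrict_mem measurableSet_Ioi] with u hu
    have := integral_indicator_lt_right (φ := fun u => ‖φ u‖) u (le_of_lt hu)
    simp only [norm_indicator_eq_indicator_norm]
    rw [this, norm_mul, Real.norm_of_nonneg (sub_nonneg.mpr (le_of_lt hu))]

lemma integrableOn_integral_Ioi (h : IntegrableOn (fun u => (u - z) * φ u) (Ioi z)) :
    IntegrableOn (fun x => ∫ u in Ioi x, φ u) (Ioi z) := by
  refine (integrable_indicator_lt h).integral_prod_left.congr ?_
  filter_upwards [ae_restrict_mem measurableSet_Ioi] with x hx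
  exact integral_indicator_lt_left x (le_of_lt hx)

theorem integral_Ioi_integral_Ioi (h : IntegrableOn (fun u => (u - z) * φ u) (Ioi z)) :
    ∫ x in Ioi z, ∫ u in Ioi x, φ u = ∫ u in Ioi z, (u - z) * φ u := by
  have hint := integrable_indicator_lt h
  calc ∫ x in Ioi z, ∫ u in Ioi x, φ u
      = ∫ x in Ioi z, ∫ u in Ioi z,
          {p : ℝ × ℝ | p.1 < p.2}.indicator (fun p => φ p.2) (x, u) :=
        setIntegral_congr_fun measurableSet_Ioi fun x hx =>
          (integral_indicator_lt_left x (le_of_lt hx)).symm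
    _ = ∫ u in Ioi z, ∫ x in Ioi z,
          {p : ℝ × ℝ | p.1 < p.2}.indicator (fun p => φ p.2) (x, u) := by
        rw [← integral_prod _ hint, integral_prod_symm _ hint]
    _ = ∫ u in Ioi z, (u - z) * φ u :=
        setIntegral_congr_fun measurableSet_Ioi fun u hu =>
          integral_indicator_lt_right u (le_of_lt hu)

end TailIntegral

lemma integrableOn_Ioi_rpow_mul_exp_neg {F : ℝ → ℝ} {s b z : ℝ} (hs : -1 < s) (hb : 0 < b)
    (hz : 0 ≤ z) (hF : AEStronglyMeasurable F (volume.restrict (Ioi z)))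
    (hFb : ∀ u ∈ Ioi z, b * u ^ 2 ≤ F u) :
    IntegrableOn (fun u => u ^ s * exp (-F u)) (Ioi z) := by
  refine (integrable_rpow_mul_exp_neg_mul_sq hb hs).integrableOn.mono'
    ((measurable_id.pow_const s).aestronglyMeasurable.mul
      (continuous_exp.comp_aestronglyMeasurable hF.neg)) ?_
  filter_upwards [ae_restrict_mem measurableSet_Ioi] with u hu
  have hs_nonneg : 0 ≤ u ^ s := rpow_nonneg (hz.trans hu.le) s
  rw [norm_of_nonneg (mul_nonneg hs_nonneg (exp_pos _).le)]
  exact mul_le_mul_of_nonneg_left (exp_le_exp.mpr (by linarith [hFb u hu])) hs_nonneg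

lemma integral_Ioi_ite_le {g : ℝ → ℝ} {z : ℝ} (hz : 0 ≤ z) (hg : IntegrableOn g (Ioi z))
    (c : ℝ) :
    ∫ x in Ioi 0, (if x ≤ z then c else g x) = z * c + ∫ x in Ioi z, g x := by
  have hc : IntegrableOn (fun x => if x ≤ z then c else g x) (Ioc 0 z) :=
    (integrableOn_const (C := c) measure_Ioc_lt_top.ne).congr_fun (fun x hx => by simp [hx.2])
      measurableSet_Ioc
  have hg' : IntegrableOn (fun x => if x ≤ z then c else g x) (Ioi z) :=
    hg.congr_fun (fun x hx => by simp [not_le.mpr (mem_Ioi.mp hx)]) measurableSet_Ioi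
  rw [← Ioc_union_Ioi_eq_Ioi hz,
    setIntegral_union (Ioc_disjoint_Ioi le_rfl) measurableSet_Ioi hc hg',
    setIntegral_congr_fun measurableSet_Ioc (g := fun _ => c) fun x hx => by simp [hx.2],
    setIntegral_congr_fun measurableSet_Ioi (g := g) fun x hx => by
      simp [not_le.mpr (mem_Ioi.mp hx)],
    setIntegral_const, measureReal_def, Real.volume_Ioc, sub_zero, ENNReal.toReal_ofReal hz,
    smul_eq_mul]

section IntegralDiv

variable {R : ℝ → ℝ} {r₁ r₂ : ℝ}

lemma intervalIntegrable_div_of_le (hR : Measurable R) (hr : 0 < r₁)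
    (hRb : ∀ x, 0 < x → r₁ ≤ R x) {u : ℝ} (hu : 0 ≤ u) :
    IntervalIntegrable (fun v => v / R v) volume 0 u := by
  refine ((continuous_id.div_const r₁).intervalIntegrable 0 u).mono_fun'
    (measurable_id.div hR).aestronglyMeasurable ?_
  rw [uIoc_of_le hu]
  filter_upwards [ae_restrict_mem measurableSet_Ioc] with v hv
  rw [norm_of_nonneg (div_nonneg hv.1.le (hr.trans_le (hRb v hv.1)).le)]
  exact div_le_div_of_nonneg_left hv.1.le hr (hRb v hv.1)

lemma monotoneOn_integral_div (hR : Measurable R) (hr : 0 < r₁)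
    (hRb : ∀ x, 0 < x → r₁ ≤ R x) :
    MonotoneOn (fun u => ∫ v in 0..u, v / R v) (Ici 0) := by
  intro a ha b hb hab
  have hab_int := (intervalIntegrable_div_of_le hR hr hRb ha).symm.trans
    (intervalIntegrable_div_of_le hR hr hRb hb)
  have h_nonneg : 0 ≤ ∫ v in a..b, v / R v := by
    refine intervalIntegral.integral_nonneg hab fun v hv => ?_
    rcases (ha.trans hv.1).eq_or_lt with rfl | hv0
    · simp
    · exact div_nonneg hv0.le (hr.trans_le (hRb v hv0)).le
  simp only
  rw [← intervalIntegral.integral_add_adjacent_intervals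
    (intervalIntegrable_div_of_le hR hr hRb ha) hab_int]
  linarith

lemma sq_div_le_integral_div (hR : Measurable R) (hr : 0 < r₁)
    (hRb : ∀ x, 0 < x → R x ∈ Icc r₁ r₂) {u : ℝ} (hu : 0 ≤ u) :
    (2 * r₂)⁻¹ * u ^ 2 ≤ ∫ v in 0..u, v / R v := by
  calc (2 * r₂)⁻¹ * u ^ 2 = ∫ v in 0..u, v / r₂ := by
        rw [intervalIntegral.integral_div, integral_id]; ring
    _ ≤ ∫ v in 0..u, v / R v := by
        refine intervalIntegral.integral_mono_on hu
          ((continuous_id.div_const r₂).intervalIntegrable 0 u)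
          (intervalIntegrable_div_of_le hR hr (fun x hx => (hRb x hx).1) hu) fun v hv => ?_
        rcases hv.1.eq_or_lt with rfl | hv0
        · simp
        · exact div_le_div_of_nonneg_left hv0.le (hr.trans_le (hRb v hv0).1) (hRb v hv0).2

end IntegralDiv

theorem stmt18 (n r₁ r₂ : ℝ) (hn : n ∈ Set.Ioo (0:ℝ) 2) (hr : 0 < r₁) (hr' : r₁ ≤ r₂)
    (R : ℝ → ℝ) (hR : Measurable R) (hRb : ∀ x, 0 < x → R x ∈ Set.Icc r₁ r₂)
    (vplus cplus : ℝ → ℝ)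
    (hv : ∀ x : ℝ, vplus x
      = ∫ u in Set.Ioi x, u ^ (1 - n) * Real.exp (-∫ v in (0:ℝ)..u, v / R v))
    (hcp : ∀ z : ℝ, cplus z = z ^ (n - 1) / R z * Real.exp (∫ v in (0:ℝ)..z, v / R v))
    (z : ℝ) (hz : 0 < z) :
    (∫ x in Set.Ioi (0:ℝ), (if x ≤ z then cplus z * vplus z else cplus z * vplus x))
      = z ^ (n - 1) / R z * Real.exp (∫ v in (0:ℝ)..z, v / R v)
        * ∫ a in Set.Ioi z, a ^ (2 - n) * Real.exp (-∫ v in (0:ℝ)..a, v / R v) := by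
  obtain rfl : vplus = _ := funext hv
  rw [← hcp]
  set F : ℝ → ℝ := fun u => ∫ v in (0:ℝ)..u, v / R v
  -- `R` is unconstrained on `(-∞, 0]`, so `F` is only known to be monotone on `[0, ∞)`.
  have hF_meas : AEStronglyMeasurable F (volume.restrict (Ioi z)) :=
    (aemeasurable_restrict_of_monotoneOn measurableSet_Ioi
      ((monotoneOn_integral_div hR hr fun x hx => (hRb x hx).1).mono
        (Ioi_subset_Ici hz.le))).aestronglyMeasurable
  have hF_ge : ∀ u ∈ Ioi z, (2 * r₂)⁻¹ * u ^ 2 ≤ F u := fun u hu =>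
    sq_div_le_integral_div hR hr hRb (hz.trans hu).le
  have hb : 0 < (2 * r₂)⁻¹ := inv_pos.mpr (by linarith)
  have hφ : IntegrableOn (fun u => u ^ (1 - n) * exp (-F u)) (Ioi z) :=
    integrableOn_Ioi_rpow_mul_exp_neg (by linarith [hn.2]) hb hz.le hF_meas hF_ge
  have huφ : IntegrableOn (fun u => u ^ (2 - n) * exp (-F u)) (Ioi z) :=
    integrableOn_Ioi_rpow_mul_exp_neg (by linarith [hn.2]) hb hz.le hF_meas hF_ge
  have h_eq : ∀ u ∈ Ioi z, u ^ (2 - n) * exp (-F u)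
      = z * (u ^ (1 - n) * exp (-F u)) + (u - z) * (u ^ (1 - n) * exp (-F u)) := by
    intro u hu
    rw [show 2 - n = 1 + (1 - n) by ring, rpow_add (hz.trans hu), rpow_one]
    ring
  have hsubφ : IntegrableOn (fun u => (u - z) * (u ^ (1 - n) * exp (-F u))) (Ioi z) :=
    (huφ.sub (hφ.const_mul z)).congr_fun
      (fun u hu => by simp only [Pi.sub_apply, h_eq u hu]; ring) measurableSet_Ioi
  rw [integral_Ioi_ite_le hz.le ((integrableOn_integral_Ioi hsubφ).const_mul _),
    integral_const_mul, integral_Ioi_integral_Ioi hsubφ,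
    setIntegral_congr_fun measurableSet_Ioi h_eq,
    integral_add (hφ.const_mul z) hsubφ, integral_const_mul]
  ring
end

section
/- Let n ∈ (0,2), 0 < r₁ ≤ R(x) ≤ r₂ on (0,∞), and weight w(x) = x^{n-1} e^{∫₀^x v/R(v) dv}/R(x). For any f smooth with ‖f‖²_w := ∫₀^∞ w|f|² < ∞ and ‖Δ_n f‖_w < ∞ and lim_{x→0} x^{n-1} f'(x) = 0, and for any c > 0: ∫₀^∞ x^{n-1} |f'(x)|² dx ≤ c r₂ ‖f‖²_w + (r₂/c) ‖Δ_n f‖²_w. -/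
open Real MeasureTheory

-- Auxiliary: a nonneg integrable function on (0,∞) cannot be bounded below by m>0 on [x₁,∞)
lemma aux_not_big {G : ℝ → ℝ} (hG : IntegrableOn G (Set.Ioi 0))
    {m x₁ : ℝ} (hm : 0 < m) (hx₁ : 0 < x₁) (h : ∀ x, x₁ ≤ x → m ≤ G x) : False := by
  have h1 : IntegrableOn G (Set.Ioi x₁) := hG.mono_set (Set.Ioi_subset_Ioi hx₁.le)
  have h2 := h1.2
  have h3 : (ENNReal.ofReal m) * volume (Set.Ioi x₁) ≤ ∫⁻ x in Set.Ioi x₁, ‖G x‖₊ := by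
    rw [← MeasureTheory.setLIntegral_const]
    refine MeasureTheory.lintegral_mono_ae ?_
    filter_upwards [MeasureTheory.ae_restrict_mem measurableSet_Ioi] with x hx
    have hmx : m ≤ G x := h x (le_of_lt hx)
    have : m ≤ ‖G x‖ := hmx.trans (le_abs_self _)
    calc ENNReal.ofReal m ≤ ENNReal.ofReal ‖G x‖ := ENNReal.ofReal_le_ofReal this
      _ = (‖G x‖₊ : ENNReal) := by rw [← ENNReal.ofReal_coe_nnreal]; simp [Real.norm_eq_abs]
  rw [Real.volume_Ioi, ENNReal.mul_top ((ENNReal.ofReal_pos.mpr hm).ne')] at h3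
  exact absurd (lt_of_le_of_lt h3 h2) (by simp)

lemma aux_meas_rpow (p : ℝ) : Measurable (fun x : ℝ => x ^ p) := by measurability

set_option maxHeartbeats 2000000 in
theorem stmt19 (n r₁ r₂ c : ℝ) (hn : n ∈ Set.Ioo (0:ℝ) 2) (hr : 0 < r₁) (hr' : r₁ ≤ r₂)
    (hc : 0 < c)
    (R : ℝ → ℝ) (hR : Measurable R) (hRb : ∀ x, 0 < x → R x ∈ Set.Icc r₁ r₂)
    (f : ℝ → ℝ) (hf : ContDiff ℝ (⊤ : ℕ∞) f)
    (hfL2 : IntegrableOn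
      (fun x => (x ^ (n - 1) * Real.exp (∫ v in (0:ℝ)..x, v / R v) / R x) * (f x) ^ 2)
      (Set.Ioi 0))
    (hΔL2 : IntegrableOn
      (fun x => (x ^ (n - 1) * Real.exp (∫ v in (0:ℝ)..x, v / R v) / R x)
        * ((n - 1) / x * deriv f x + deriv (deriv f) x) ^ 2) (Set.Ioi 0))
    (hbd : Filter.Tendsto (fun x => x ^ (n - 1) * deriv f x) (nhdsWithin 0 (Set.Ioi 0)) (nhds 0)) :
    (∫ x in Set.Ioi (0:ℝ), x ^ (n - 1) * (deriv f x) ^ 2)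
      ≤ c * r₂ * (∫ x in Set.Ioi (0:ℝ),
          (x ^ (n - 1) * Real.exp (∫ v in (0:ℝ)..x, v / R v) / R x) * (f x) ^ 2)
        + (r₂ / c) * ∫ x in Set.Ioi (0:ℝ),
            (x ^ (n - 1) * Real.exp (∫ v in (0:ℝ)..x, v / R v) / R x)
              * ((n - 1) / x * deriv f x + deriv (deriv f) x) ^ 2 := by
  obtain ⟨hn0, hn2⟩ := hn
  set w : ℝ → ℝ := fun x => x ^ (n - 1) * Real.exp (∫ v in (0:ℝ)..x, v / R v) / R x with hw_def
  set Δ : ℝ → ℝ := fun x => (n - 1) / x * deriv f x + deriv (deriv f) x with hΔ_def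
  set g : ℝ → ℝ := fun x => x ^ (n - 1) * deriv f x with hg_def
  set h : ℝ → ℝ := fun x => x ^ (n - 1) * (deriv f x) ^ 2 with hh_def
  set H : ℝ → ℝ := fun x => (x ^ (n - 1) * Δ x) * f x with hH_def
  set φ : ℝ → ℝ := fun x => g x * f x with hφ_def
  -- smoothness facts
  have hf1 : Differentiable ℝ f := hf.differentiable (by simp)
  have hfd : ∀ x, HasDerivAt f (deriv f x) x := fun x => (hf1 x).hasDerivAt
  have hf2 : ContDiff ℝ (↑(⊤:ℕ∞)) f := hf.of_le (by simp)
  have hf' : ContDiff ℝ (↑(⊤:ℕ∞)) (deriv f) := (contDiff_infty_iff_deriv.mp hf2).2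
  have cf : Continuous f := hf.continuous
  have cf' : Continuous (deriv f) := hf'.continuous
  have hf'd : ∀ x, HasDerivAt (deriv f) (deriv (deriv f) x) x :=
    fun x => ((hf'.differentiable (by simp)) x).hasDerivAt
  have cf'' : Continuous (deriv (deriv f)) := ((contDiff_infty_iff_deriv.mp hf').2).continuous
  -- derivative of g on (0,∞)
  have hgd : ∀ x : ℝ, 0 < x → HasDerivAt g (x ^ (n - 1) * Δ x) x := by
    intro x hx
    have h1 : HasDerivAt (fun y : ℝ => y ^ (n - 1)) ((n - 1) * x ^ (n - 1 - 1)) x :=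
      Real.hasDerivAt_rpow_const (Or.inl hx.ne')
    have h2 : HasDerivAt g ((n - 1) * x ^ (n - 1 - 1) * deriv f x + x ^ (n - 1) * deriv (deriv f) x) x :=
      h1.mul (hf'd x)
    convert h2 using 1
    have hx1 : x ^ (n - 1 - 1) = x ^ (n - 1) / x := by
      rw [Real.rpow_sub hx, Real.rpow_one]
    rw [hΔ_def, hx1]
    field_simp
  -- continuity of auxiliary functions away from 0
  have cΔ : ∀ x : ℝ, x ≠ 0 → ContinuousAt Δ x := by
    intro x hx0
    exact ((continuousAt_const.div continuousAt_id hx0).mul cf'.continuousAt).add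
      cf''.continuousAt
  have cg' : ∀ s : Set ℝ, (∀ x ∈ s, x ≠ 0) → ContinuousOn (fun x => x ^ (n - 1) * Δ x) s := by
    intro s hs x hx
    exact ((Real.continuousAt_rpow_const x (n - 1) (Or.inl (hs x hx))).mul
      (cΔ x (hs x hx))).continuousWithinAt
  have ch : ∀ s : Set ℝ, (∀ x ∈ s, x ≠ 0) → ContinuousOn h s := by
    intro s hs x hx
    exact ((Real.continuousAt_rpow_const x (n - 1) (Or.inl (hs x hx))).mul
      (cf'.continuousAt.pow 2)).continuousWithinAt
  have hhint : ∀ p q : ℝ, 0 < p → 0 < q → IntervalIntegrable h volume p q := by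
    intro p q hp hq
    exact (ch _ (fun x hx => (lt_of_lt_of_le (lt_min hp hq) hx.1).ne')).intervalIntegrable
  -- integration by parts
  have ibp : ∀ a b : ℝ, 0 < a → a ≤ b →
      ∫ x in a..b, h x = φ b - φ a - ∫ x in a..b, H x := by
    intro a b ha hab
    have hIcc : Set.uIcc a b = Set.Icc a b := Set.uIcc_of_le hab
    have hmem : ∀ x ∈ Set.uIcc a b, 0 < x := by
      rw [hIcc]; intro x hx; exact lt_of_lt_of_le ha hx.1
    have hu : ∀ x ∈ Set.uIcc a b, HasDerivAt g (x ^ (n - 1) * Δ x) x :=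
      fun x hx => hgd x (hmem x hx)
    have hv : ∀ x ∈ Set.uIcc a b, HasDerivAt f (deriv f x) x := fun x _ => hfd x
    have hu' : IntervalIntegrable (fun x => x ^ (n - 1) * Δ x) volume a b :=
      (cg' _ (fun x hx => (hmem x hx).ne')).intervalIntegrable
    have hv' : IntervalIntegrable (deriv f) volume a b := cf'.intervalIntegrable _ _
    have hkey := intervalIntegral.integral_mul_deriv_eq_deriv_mul hu hv hu' hv'
    calc ∫ x in a..b, h x = ∫ x in a..b, g x * deriv f x := by
          apply intervalIntegral.integral_congr
          intro x hx
          simp only [hh_def, hg_def]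
          ring
      _ = φ b - φ a - ∫ x in a..b, H x := hkey
  -- pointwise weight bounds
  have hr₂ : (0:ℝ) < r₂ := lt_of_lt_of_le hr hr'
  have hwge : ∀ x : ℝ, 0 < x → x ^ (n - 1) ≤ r₂ * w x := by
    intro x hx
    have hE : 1 ≤ Real.exp (∫ v in (0:ℝ)..x, v / R v) := by
      rw [Real.one_le_exp_iff]
      apply intervalIntegral.integral_nonneg hx.le
      intro u hu
      rcases eq_or_lt_of_le hu.1 with h0 | h0
      · simp [← h0]
      · exact div_nonneg h0.le (lt_of_lt_of_le hr (hRb u h0).1).le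
    obtain ⟨hR1, hR2⟩ := hRb x hx
    have hRx : 0 < R x := lt_of_lt_of_le hr hR1
    have hxp : (0:ℝ) ≤ x ^ (n - 1) := Real.rpow_nonneg hx.le _
    have hdiv : x ^ (n - 1) / r₂ ≤ w x := by
      rw [hw_def]
      exact div_le_div₀ (by positivity) (le_mul_of_one_le_right hxp hE) hRx hR2
    have := (div_le_iff₀ hr₂).mp hdiv
    linarith
  -- integrability of H with the right bound
  have hD_int : IntegrableOn (fun x => c * r₂ * (w x * f x ^ 2) + (r₂ / c) * (w x * Δ x ^ 2))
      (Set.Ioi 0) := (hfL2.const_mul (c * r₂)).add (hΔL2.const_mul (r₂ / c))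
  have hwpos : ∀ x : ℝ, 0 < x → 0 ≤ w x := by
    intro x hx
    have h1 := hwge x hx
    have hxp : (0:ℝ) ≤ x ^ (n - 1) := Real.rpow_nonneg hx.le _
    nlinarith
  have hHbd : ∀ x ∈ Set.Ioi (0:ℝ),
      |H x| ≤ c * r₂ * (w x * f x ^ 2) + (r₂ / c) * (w x * Δ x ^ 2) := by
    intro x hx
    have hx0 : (0:ℝ) < x := hx
    have h1 := hwge x hx0
    have hw0 := hwpos x hx0
    have hxp : (0:ℝ) ≤ x ^ (n - 1) := Real.rpow_nonneg hx0.le _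
    have e1 : |H x| = x ^ (n - 1) * (|f x| * |Δ x|) := by
      rw [hH_def, abs_mul, abs_mul, abs_of_nonneg hxp]
      ring
    have e2 : x ^ (n - 1) * (|f x| * |Δ x|) ≤ r₂ * w x * (|f x| * |Δ x|) :=
      mul_le_mul_of_nonneg_right h1 (by positivity)
    have e3 : r₂ * w x * (|f x| * |Δ x|) ≤
        c * r₂ * (w x * f x ^ 2) + (r₂ / c) * (w x * Δ x ^ 2) := by
      have hq : c * (|f x| * |Δ x|) ≤ c ^ 2 * f x ^ 2 + Δ x ^ 2 := by
        nlinarith [sq_nonneg (c * |f x| - |Δ x|), sq_abs (f x), sq_abs (Δ x),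
          mul_nonneg (mul_nonneg hc.le (abs_nonneg (f x))) (abs_nonneg (Δ x))]
      have hq2 : r₂ * (|f x| * |Δ x|) ≤ c * r₂ * f x ^ 2 + (r₂ / c) * Δ x ^ 2 := by
        have h4 : c * (r₂ * (|f x| * |Δ x|)) ≤ c * (c * r₂ * f x ^ 2 + r₂ / c * Δ x ^ 2) := by
          have hy : c * (c * r₂ * f x ^ 2 + r₂ / c * Δ x ^ 2)
              = c ^ 2 * r₂ * f x ^ 2 + r₂ * Δ x ^ 2 := by
            field_simp
          rw [hy]
          nlinarith [mul_le_mul_of_nonneg_left hq hr₂.le]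
        exact le_of_mul_le_mul_left h4 hc
      calc r₂ * w x * (|f x| * |Δ x|) = w x * (r₂ * (|f x| * |Δ x|)) := by ring
        _ ≤ w x * (c * r₂ * f x ^ 2 + (r₂ / c) * Δ x ^ 2) :=
          mul_le_mul_of_nonneg_left hq2 hw0
        _ = c * r₂ * (w x * f x ^ 2) + (r₂ / c) * (w x * Δ x ^ 2) := by ring
    rw [e1]
    exact le_trans e2 e3
  have mrpow : Measurable (fun x : ℝ => x ^ (n - 1)) := aux_meas_rpow _
  have mΔ : Measurable Δ := ((measurable_const.div measurable_id).mul cf'.measurable).add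
    cf''.measurable
  have hH_meas : AEStronglyMeasurable H (volume.restrict (Set.Ioi (0:ℝ))) :=
    (((mrpow.mul mΔ).mul cf.measurable)).aestronglyMeasurable
  have hH_int : IntegrableOn H (Set.Ioi 0) := by
    refine Integrable.mono' hD_int hH_meas ?_
    filter_upwards [MeasureTheory.ae_restrict_mem measurableSet_Ioi] with x hx
    simpa [Real.norm_eq_abs] using hHbd x hx
  -- integrability of x^{n-1} f^2
  have hG_int : IntegrableOn (fun x => x ^ (n - 1) * f x ^ 2) (Set.Ioi 0) := by
    refine Integrable.mono' (hfL2.const_mul r₂) ((mrpow.mul (cf.pow 2).measurable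
      ).aestronglyMeasurable) ?_
    filter_upwards [MeasureTheory.ae_restrict_mem measurableSet_Ioi] with x hx
    have hx0 : (0:ℝ) < x := hx
    have hxp : (0:ℝ) ≤ x ^ (n - 1) := Real.rpow_nonneg hx0.le _
    rw [Real.norm_eq_abs, abs_of_nonneg (by positivity)]
    calc x ^ (n - 1) * f x ^ 2 ≤ (r₂ * w x) * f x ^ 2 :=
        mul_le_mul_of_nonneg_right (hwge x hx0) (sq_nonneg _)
      _ = r₂ * (w x * f x ^ 2) := by ring
  -- no positive drift
  have h2n : (0:ℝ) < 2 - n := by linarith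
  -- the fundamental theorem of calculus for f^2
  have ftc : ∀ x₀ x : ℝ, ∫ t in x₀..x, 2 * (f t * deriv f t) = f x ^ 2 - f x₀ ^ 2 := by
    intro x₀ x
    have hd : ∀ t ∈ Set.uIcc x₀ x, HasDerivAt (fun y => f y ^ 2) (2 * (f t * deriv f t)) t := by
      intro t _
      have h1 : HasDerivAt (fun y => f y ^ 2) ((2:ℕ) * f t ^ (2 - 1) * deriv f t) t := (hfd t).pow 2
      convert h1 using 1
      rw [show (2:ℕ) - 1 = 1 from rfl, pow_one, Nat.cast_ofNat]; ring
    exact intervalIntegral.integral_eq_sub_of_hasDerivAt hd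
      ((continuous_const.mul (cf.mul cf')).intervalIntegrable _ _)
  have rint : ∀ x₀ x : ℝ, 0 < x₀ → IntervalIntegrable (fun t : ℝ => t ^ (1 - n)) volume x₀ x →
      True := fun _ _ _ _ => trivial
  have rpowint : ∀ x₀ x : ℝ, 0 < x₀ → 0 < x →
      IntervalIntegrable (fun t : ℝ => t ^ (1 - n)) volume x₀ x := by
    intro x₀ x h0 h1
    apply ContinuousOn.intervalIntegrable
    intro t ht
    exact (Real.continuousAt_rpow_const t (1 - n)
      (Or.inl (lt_of_lt_of_le (lt_min h0 h1) ht.1).ne')).continuousWithinAt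
  have rpowval : ∀ x₀ x : ℝ, ∫ t in x₀..x, (t : ℝ) ^ (1 - n)
      = (x ^ (2 - n) - x₀ ^ (2 - n)) / (2 - n) := by
    intro x₀ x
    rw [integral_rpow (Or.inl (by linarith)), show (1:ℝ) - n + 1 = 2 - n by ring]
  have lemP : ¬ ∃ ε > (0:ℝ), ∀ᶠ x in Filter.atTop, ε ≤ φ x := by
    rintro ⟨ε, hε, hev⟩
    rw [Filter.eventually_atTop] at hev
    obtain ⟨x₀', hx₀'⟩ := hev
    set x₀ := max x₀' 1 with hx₀def
    have hx₀1 : (1:ℝ) ≤ x₀ := le_max_right _ _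
    have hx₀0 : (0:ℝ) < x₀ := lt_of_lt_of_le one_pos hx₀1
    have hφε : ∀ x, x₀ ≤ x → ε ≤ φ x := fun x hx => hx₀' x (le_trans (le_max_left _ _) hx)
    have grow : ∀ x, x₀ ≤ x →
        2 * ε * (x ^ (2 - n) - x₀ ^ (2 - n)) ≤ (f x ^ 2 - f x₀ ^ 2) * (2 - n) := by
      intro x hx
      have hx0 : 0 < x := lt_of_lt_of_le hx₀0 hx
      have e2 : ∫ t in x₀..x, 2 * ε * t ^ (1 - n) ≤ ∫ t in x₀..x, 2 * (f t * deriv f t) := by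
        apply intervalIntegral.integral_mono_on hx
        · exact (rpowint x₀ x hx₀0 hx0).const_mul _
        · exact (continuous_const.mul (cf.mul cf')).intervalIntegrable _ _
        · intro t ht
          have ht0 : 0 < t := lt_of_lt_of_le hx₀0 ht.1
          have hφt := hφε t ht.1
          have hkey : t ^ (1 - n) * t ^ (n - 1) = 1 := by
            rw [← Real.rpow_add ht0]; norm_num
          have h2 : 0 < t ^ (1 - n) := Real.rpow_pos_of_pos ht0 _
          have hm := mul_le_mul_of_nonneg_left hφt h2.le
          have : t ^ (1 - n) * φ t = t ^ (1 - n) * t ^ (n - 1) * (deriv f t * f t) := by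
            rw [hφ_def, hg_def]; ring
          rw [this, hkey] at hm
          nlinarith [hm]
      have e3 : ∫ t in x₀..x, 2 * ε * t ^ (1 - n)
          = 2 * ε * ((x ^ (2 - n) - x₀ ^ (2 - n)) / (2 - n)) := by
        rw [intervalIntegral.integral_const_mul, rpowval]
      rw [e3, ftc x₀ x] at e2
      rw [← sub_nonneg] at e2 ⊢
      have : (f x ^ 2 - f x₀ ^ 2) * (2 - n) - 2 * ε * (x ^ (2 - n) - x₀ ^ (2 - n))
          = ((f x ^ 2 - f x₀ ^ 2) - 2 * ε * ((x ^ (2 - n) - x₀ ^ (2 - n)) / (2 - n))) * (2 - n) := by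
        field_simp
        try ring
      rw [this]
      positivity
    -- choose the threshold
    set A : ℝ := (2 * ε * x₀ ^ (2 - n) - (2 - n) * f x₀ ^ 2) / ε with hA_def
    obtain ⟨x₁, hx₁⟩ := Filter.eventually_atTop.mp
      ((tendsto_rpow_atTop h2n).eventually_ge_atTop A)
    set x₂ := max x₁ x₀ with hx₂def
    have hx₂0 : 0 < x₂ := lt_of_lt_of_le hx₀0 (le_max_right _ _)
    refine aux_not_big hG_int (m := ε / (2 - n) * x₂) (by positivity) hx₂0 ?_
    intro x hx
    have hxx₀ : x₀ ≤ x := le_trans (le_max_right _ _) hx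
    have hx0 : 0 < x := lt_of_lt_of_le hx₂0 hx
    have hA := hx₁ x (le_trans (le_max_left _ _) hx)
    have hgrow := grow x hxx₀
    have hεA : ε * A = 2 * ε * x₀ ^ (2 - n) - (2 - n) * f x₀ ^ 2 := by
      rw [hA_def]; field_simp
    have hfsq : ε * x ^ (2 - n) ≤ (2 - n) * f x ^ 2 := by
      have := mul_le_mul_of_nonneg_left hA hε.le
      nlinarith [this, hεA, hgrow]
    have hxid : x ^ (n - 1) * x ^ (2 - n) = x := by
      rw [← Real.rpow_add hx0]; norm_num
    have hxp : 0 < x ^ (n - 1) := Real.rpow_pos_of_pos hx0 _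
    have h5 : ε * x ≤ (2 - n) * (x ^ (n - 1) * f x ^ 2) := by
      have := mul_le_mul_of_nonneg_left hfsq hxp.le
      nlinarith [this, hxid]
    rw [div_mul_eq_mul_div, div_le_iff₀ h2n]
    have hx₂x : ε * x₂ ≤ ε * x := mul_le_mul_of_nonneg_left hx hε.le
    nlinarith [h5, hx₂x]
  have lemN : ¬ ∃ ε > (0:ℝ), ∀ᶠ x in Filter.atTop, φ x ≤ -ε := by
    rintro ⟨ε, hε, hev⟩
    rw [Filter.eventually_atTop] at hev
    obtain ⟨x₀', hx₀'⟩ := hev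
    set x₀ := max x₀' 1 with hx₀def
    have hx₀1 : (1:ℝ) ≤ x₀ := le_max_right _ _
    have hx₀0 : (0:ℝ) < x₀ := lt_of_lt_of_le one_pos hx₀1
    have hφε : ∀ x, x₀ ≤ x → φ x ≤ -ε := fun x hx => hx₀' x (le_trans (le_max_left _ _) hx)
    have decay : ∀ x, x₀ ≤ x →
        (f x ^ 2 - f x₀ ^ 2) * (2 - n) ≤ -(2 * ε) * (x ^ (2 - n) - x₀ ^ (2 - n)) := by
      intro x hx
      have hx0 : 0 < x := lt_of_lt_of_le hx₀0 hx
      have e2 : ∫ t in x₀..x, 2 * (f t * deriv f t) ≤ ∫ t in x₀..x, -(2 * ε) * t ^ (1 - n) := by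
        apply intervalIntegral.integral_mono_on hx
        · exact (continuous_const.mul (cf.mul cf')).intervalIntegrable _ _
        · exact (rpowint x₀ x hx₀0 hx0).const_mul _
        · intro t ht
          have ht0 : 0 < t := lt_of_lt_of_le hx₀0 ht.1
          have hφt := hφε t ht.1
          have hkey : t ^ (1 - n) * t ^ (n - 1) = 1 := by
            rw [← Real.rpow_add ht0]; norm_num
          have h2 : 0 < t ^ (1 - n) := Real.rpow_pos_of_pos ht0 _
          have hm := mul_le_mul_of_nonneg_left hφt h2.le
          have : t ^ (1 - n) * φ t = t ^ (1 - n) * t ^ (n - 1) * (deriv f t * f t) := by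
            rw [hφ_def, hg_def]; ring
          rw [this, hkey] at hm
          nlinarith [hm]
      have e3 : ∫ t in x₀..x, -(2 * ε) * t ^ (1 - n)
          = -(2 * ε) * ((x ^ (2 - n) - x₀ ^ (2 - n)) / (2 - n)) := by
        rw [intervalIntegral.integral_const_mul, rpowval]
      rw [e3, ftc x₀ x] at e2
      rw [← sub_nonneg] at e2 ⊢
      have : -(2 * ε) * (x ^ (2 - n) - x₀ ^ (2 - n)) - (f x ^ 2 - f x₀ ^ 2) * (2 - n)
          = (-(2 * ε) * ((x ^ (2 - n) - x₀ ^ (2 - n)) / (2 - n)) - (f x ^ 2 - f x₀ ^ 2)) * (2 - n) := by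
        field_simp
        try ring
      rw [this]
      positivity
    set B : ℝ := x₀ ^ (2 - n) + (2 - n) * (f x₀ ^ 2 + 1) / (2 * ε) with hB_def
    obtain ⟨x₃, hx₃⟩ := ((tendsto_rpow_atTop h2n).eventually_ge_atTop B).and
      (Filter.eventually_ge_atTop x₀) |>.exists
    obtain ⟨hB, hxx₀⟩ := hx₃
    have hεB : 2 * ε * (B - x₀ ^ (2 - n)) = (2 - n) * (f x₀ ^ 2 + 1) := by
      rw [hB_def]; field_simp; ring
    have hdec := decay x₃ hxx₀
    have hmul := mul_le_mul_of_nonneg_left hB (by positivity : (0:ℝ) ≤ 2 * ε)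
    nlinarith [sq_nonneg (f x₃), hdec, hmul, hεB, h2n]
  -- φ tends to 0 at infinity
  have hH1 : IntegrableOn H (Set.Ioi 1) := hH_int.mono_set (Set.Ioi_subset_Ioi zero_le_one)
  have hNlim : Filter.Tendsto (fun b => ∫ x in (1:ℝ)..b, H x) Filter.atTop
      (nhds (∫ x in Set.Ioi 1, H x)) :=
    MeasureTheory.intervalIntegral_tendsto_integral_Ioi 1 hH1 Filter.tendsto_id
  have hNbd : ∀ b, 1 ≤ b → |∫ x in (1:ℝ)..b, H x| ≤ ∫ x in Set.Ioi 1, |H x| := by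
    intro b hb
    have h1 : |∫ x in (1:ℝ)..b, H x| ≤ ∫ x in (1:ℝ)..b, |H x| :=
      intervalIntegral.abs_integral_le_integral_abs hb
    have h2 : ∫ x in (1:ℝ)..b, |H x| ≤ ∫ x in Set.Ioi 1, |H x| := by
      rw [intervalIntegral.integral_of_le hb]
      apply MeasureTheory.setIntegral_mono_set hH1.abs
      · filter_upwards with x using abs_nonneg _
      · exact HasSubset.Subset.eventuallyLE Set.Ioc_subset_Ioi_self
    linarith
  set M' : ℝ → ℝ := fun b => ∫ x in (1:ℝ)..(max 1 b), h x with hM'_def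
  have hM'eq : ∀ b, 1 ≤ b → M' b = ∫ x in (1:ℝ)..b, h x := by
    intro b hb; rw [hM'_def]; simp only [max_eq_right hb]
  have hM'mono : Monotone M' := by
    intro p q hpq
    have h1 : max 1 p ≤ max 1 q := max_le_max le_rfl hpq
    have hp0 : (0:ℝ) < max 1 p := lt_of_lt_of_le one_pos (le_max_left _ _)
    have hq0 : (0:ℝ) < max 1 q := lt_of_lt_of_le one_pos (le_max_left _ _)
    have hadd := intervalIntegral.integral_add_adjacent_intervals
      (hhint 1 (max 1 p) one_pos hp0) (hhint (max 1 p) (max 1 q) hp0 hq0)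
    have h2 : 0 ≤ ∫ x in (max 1 p)..(max 1 q), h x := by
      apply intervalIntegral.integral_nonneg h1
      intro u hu
      have hu0 : 0 < u := lt_of_lt_of_le hp0 hu.1
      exact mul_nonneg (Real.rpow_nonneg hu0.le _) (sq_nonneg _)
    rw [hM'_def]
    simp only
    linarith [hadd]
  have hMbdd : ∃ C, ∀ b, M' b ≤ C := by
    by_contra hcon
    push_neg at hcon
    apply lemP
    refine ⟨1, one_pos, ?_⟩
    obtain ⟨b, hb⟩ := hcon (1 - φ 1 + ∫ x in Set.Ioi 1, |H x|)
    rw [Filter.eventually_atTop]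
    refine ⟨max 1 b, ?_⟩
    intro x hx
    have hx1 : (1:ℝ) ≤ x := le_trans (le_max_left _ _) hx
    have hibp := ibp 1 x one_pos hx1
    have hmx : M' b ≤ M' x := hM'mono (le_trans (le_max_right _ _) hx)
    have hNx := hNbd x hx1
    rw [hM'eq x hx1] at hmx
    have habs := abs_le.mp hNx
    linarith [hibp, habs.1, habs.2, hNx, abs_nonneg (∫ t in (1:ℝ)..x, H t)]
  obtain ⟨C, hC⟩ := hMbdd
  have hM'lim : Filter.Tendsto M' Filter.atTop (nhds (⨆ b, M' b)) :=
    tendsto_atTop_ciSup hM'mono ⟨C, by rintro y ⟨b, rfl⟩; exact hC b⟩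
  have hφev : ∀ᶠ x in Filter.atTop, φ 1 + M' x + ∫ t in (1:ℝ)..x, H t = φ x := by
    filter_upwards [Filter.eventually_ge_atTop 1] with x hx
    have := ibp 1 x one_pos hx
    rw [hM'eq x hx]
    linarith
  set L : ℝ := φ 1 + (⨆ b, M' b) + ∫ x in Set.Ioi 1, H x with hL_def
  have hφlim : Filter.Tendsto φ Filter.atTop (nhds L) := by
    have h1 : Filter.Tendsto (fun x => φ 1 + M' x + ∫ t in (1:ℝ)..x, H t) Filter.atTop
        (nhds L) :=
      ((tendsto_const_nhds (x := φ 1) (f := Filter.atTop)).add hM'lim).add hNlim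
    exact Filter.Tendsto.congr' hφev h1
  have hφ0 : Filter.Tendsto φ Filter.atTop (nhds 0) := by
    rcases lt_trichotomy L 0 with hL0 | hL0 | hL0
    · exfalso
      apply lemN
      refine ⟨-L / 2, by linarith, ?_⟩
      have := hφlim.eventually (eventually_le_nhds (show L < -(-L/2) by linarith))
      exact this
    · rwa [hL0] at hφlim
    · exfalso
      apply lemP
      refine ⟨L / 2, by linarith, ?_⟩
      exact hφlim.eventually (eventually_ge_nhds (show L / 2 < L by linarith))
  -- φ tends to 0 at 0
  have hφ0' : Filter.Tendsto φ (nhdsWithin 0 (Set.Ioi 0)) (nhds 0) := by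
    have := hbd.mul (cf.continuousAt (x := 0)).continuousWithinAt
    simpa using this
  -- final assembly via AECover
  set a : ℕ → ℝ := fun k => ((k:ℝ) + 1)⁻¹ with ha_def
  set b : ℕ → ℝ := fun k => (k:ℝ) + 1 with hb_def
  have hb_pos : ∀ k, (1:ℝ) ≤ b k := by
    intro k; rw [hb_def]; simp only; linarith [Nat.cast_nonneg (α := ℝ) k]
  have ha_pos : ∀ k, 0 < a k := by
    intro k; rw [ha_def]; positivity
  have ha_le1 : ∀ k, a k ≤ 1 := by
    intro k
    rw [ha_def]
    simp only
    rw [inv_le_one_iff₀]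
    right
    push_cast
    linarith [Nat.cast_nonneg (α := ℝ) k]
  have hab : ∀ k, a k ≤ b k := fun k => le_trans (ha_le1 k) (hb_pos k)
  have hbtop : Filter.Tendsto b Filter.atTop Filter.atTop :=
    Filter.tendsto_atTop_add_const_right _ 1 tendsto_natCast_atTop_atTop
  have ha0 : Filter.Tendsto a Filter.atTop (nhds 0) := hbtop.inv_tendsto_atTop
  have hIoc_sub : ∀ k, Set.Ioc (a k) (b k) ⊆ Set.Ioi 0 :=
    fun k x hx => lt_trans (ha_pos k) hx.1
  have hcov : AECover (volume.restrict (Set.Ioi 0)) Filter.atTop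
      (fun k => Set.Ioc (a k) (b k)) := by
    constructor
    · filter_upwards [MeasureTheory.ae_restrict_mem measurableSet_Ioi] with x hx
      have h1 : ∀ᶠ k in Filter.atTop, a k < x := ha0.eventually_lt_const hx
      have h2 : ∀ᶠ k in Filter.atTop, x ≤ b k := hbtop.eventually_ge_atTop x
      filter_upwards [h1, h2] with k hk1 hk2
      exact ⟨hk1, hk2⟩
    · intro k; exact measurableSet_Ioc
  have hres : ∀ (F : ℝ → ℝ) (k : ℕ),
      ∫ x in Set.Ioc (a k) (b k), F x ∂(volume.restrict (Set.Ioi 0))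
        = ∫ x in (a k)..(b k), F x := by
    intro F k
    rw [Measure.restrict_restrict measurableSet_Ioc,
      Set.inter_eq_self_of_subset_left (hIoc_sub k), intervalIntegral.integral_of_le (hab k)]
  have hhi : ∀ k : ℕ, IntegrableOn h (Set.Ioc (a k) (b k)) (volume.restrict (Set.Ioi 0)) := by
    intro k
    rw [IntegrableOn, Measure.restrict_restrict measurableSet_Ioc,
      Set.inter_eq_self_of_subset_left (hIoc_sub k)]
    exact (hhint (a k) (b k) (ha_pos k) (lt_of_lt_of_le one_pos (hb_pos k))).1
  have hHtend : Filter.Tendsto (fun k => ∫ x in (a k)..(b k), H x) Filter.atTop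
      (nhds (∫ x in Set.Ioi 0, H x)) := by
    have h1 := hcov.integral_tendsto_of_countably_generated hH_int
    exact h1.congr (fun k => hres H k)
  have hφbk : Filter.Tendsto (fun k => φ (b k)) Filter.atTop (nhds 0) := hφ0.comp hbtop
  have hφak : Filter.Tendsto (fun k => φ (a k)) Filter.atTop (nhds 0) := by
    apply hφ0'.comp
    rw [tendsto_nhdsWithin_iff]
    exact ⟨ha0, Filter.Eventually.of_forall (fun k => ha_pos k)⟩
  have hFk : Filter.Tendsto (fun k => ∫ x in (a k)..(b k), h x) Filter.atTop
      (nhds (0 - 0 - ∫ x in Set.Ioi 0, H x)) := by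
    have h1 : ∀ k : ℕ, ∫ x in (a k)..(b k), h x
        = φ (b k) - φ (a k) - ∫ x in (a k)..(b k), H x :=
      fun k => ibp _ _ (ha_pos k) (hab k)
    exact ((hφbk.sub hφak).sub hHtend).congr (fun k => (h1 k).symm)
  have hmain : ∫ x in Set.Ioi (0:ℝ), h x = 0 - 0 - ∫ x in Set.Ioi 0, H x := by
    refine hcov.integral_eq_of_tendsto_of_nonneg_ae _ ?_ hhi ?_
    · filter_upwards [MeasureTheory.ae_restrict_mem measurableSet_Ioi] with x hx
      have hx0 : (0:ℝ) < x := hx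
      exact mul_nonneg (Real.rpow_nonneg hx0.le _) (sq_nonneg _)
    · exact hFk.congr (fun k => (hres h k).symm)
  have hIH : |∫ x in Set.Ioi (0:ℝ), H x| ≤ ∫ x in Set.Ioi (0:ℝ), |H x| := by
    simpa [Real.norm_eq_abs] using
      norm_integral_le_integral_norm (μ := volume.restrict (Set.Ioi (0:ℝ))) H
  have habs_le : ∫ x in Set.Ioi (0:ℝ), |H x|
      ≤ ∫ x in Set.Ioi (0:ℝ), (c * r₂ * (w x * f x ^ 2) + (r₂ / c) * (w x * Δ x ^ 2)) :=
    MeasureTheory.setIntegral_mono_on hH_int.abs hD_int measurableSet_Ioi hHbd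
  have hsplit : ∫ x in Set.Ioi (0:ℝ), (c * r₂ * (w x * f x ^ 2) + (r₂ / c) * (w x * Δ x ^ 2))
      = c * r₂ * (∫ x in Set.Ioi (0:ℝ), w x * f x ^ 2)
        + (r₂ / c) * ∫ x in Set.Ioi (0:ℝ), w x * Δ x ^ 2 := by
    rw [MeasureTheory.integral_add (hfL2.const_mul _) (hΔL2.const_mul _),
      MeasureTheory.integral_const_mul, MeasureTheory.integral_const_mul]
  show ∫ x in Set.Ioi (0:ℝ), h x ≤ c * r₂ * (∫ x in Set.Ioi (0:ℝ), w x * f x ^ 2)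
    + (r₂ / c) * ∫ x in Set.Ioi (0:ℝ), w x * Δ x ^ 2
  rw [hmain]
  linarith [neg_abs_le (∫ x in Set.Ioi (0:ℝ), H x), hIH, habs_le, hsplit]
end
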